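/- arXiv:1502.01385 — 6 statements merged into one kernel-verified Lean document; each statement's English description precedes it below -/
import Mathlib

section
/- Let A be a matrix with unit-normed columns, and define the lower restricted isometry constant ε_k = min over index sets T of cardinality k of σ_min(A_T). If x₀ is k-sparse, f = A x₀ + e with ‖e‖ ≤ σ, and x is any minimizer of the ℓ₀ problem min ‖x‖₀ subject to ‖f − Ax‖ ≤ σ, then ‖x − x₀‖ ≤ (2/ε_{2k}) σ. -/
open scoped InnerProductSpace

/-- Number of nonzero entries of a coefficient vector. -/
noncomputable def sparsity {N : ℕ} (x : EuclideanSpace ℂ (Fin N)) : ℕ :=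
  (Finset.univ.filter fun j => x j ≠ 0).card

lemma sparsity_sub_le {N : ℕ} (x y : EuclideanSpace ℂ (Fin N)) :
    sparsity (x - y) ≤ sparsity x + sparsity y := by
  classical
  unfold sparsity
  calc (Finset.univ.filter fun j => (x - y) j ≠ 0).card
      ≤ ((Finset.univ.filter fun j => x j ≠ 0) ∪ (Finset.univ.filter fun j => y j ≠ 0)).card := by
        apply Finset.card_le_card
        intro j hj
        simp only [Finset.mem_filter, Finset.mem_union, Finset.mem_univ, true_and] at *
        by_contra h
        push_neg at h
        apply hj
        show x j - y j = 0
        rw [h.1, h.2, sub_zero]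
    _ ≤ _ := Finset.card_union_le _ _

lemma sparsity_smul {N : ℕ} (c : ℂ) (hc : c ≠ 0) (x : EuclideanSpace ℂ (Fin N)) :
    sparsity (c • x) = sparsity x := by
  unfold sparsity
  congr 1
  apply Finset.filter_congr
  intro j _
  show (c • x) j ≠ 0 ↔ x j ≠ 0
  simp [smul_eq_mul, hc]

/-- Robust ℓ₀ recovery: any minimizer of the ℓ₀ problem is within (2/ε_{2k})σ of x₀. -/
theorem stmt0 {N : ℕ} {H : Type*} [NormedAddCommGroup H] [InnerProductSpace ℂ H]
    (A : EuclideanSpace ℂ (Fin N) →ₗ[ℂ] H) (k : ℕ)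
    (hcol : ∀ j : Fin N, ‖A (EuclideanSpace.single j 1)‖ = 1)
    (ε : ℝ)
    (hε : ε = sInf {r : ℝ | ∃ v : EuclideanSpace ℂ (Fin N),
      ‖v‖ = 1 ∧ sparsity v ≤ 2 * k ∧ r = ‖A v‖})
    (hεpos : 0 < ε)
    (σ : ℝ) (x₀ : EuclideanSpace ℂ (Fin N)) (hx₀ : sparsity x₀ ≤ k)
    (e : H) (he : ‖e‖ ≤ σ) (f : H) (hf : f = A x₀ + e)
    (x : EuclideanSpace ℂ (Fin N))
    (hfeas : ‖f - A x‖ ≤ σ)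
    (hmin : ∀ z : EuclideanSpace ℂ (Fin N), ‖f - A z‖ ≤ σ → sparsity x ≤ sparsity z) :
    ‖x - x₀‖ ≤ (2 / ε) * σ := by
  have hx₀feas : ‖f - A x₀‖ ≤ σ := by
    rw [hf]; simpa using he
  have hsx : sparsity x ≤ k := (hmin x₀ hx₀feas).trans hx₀
  by_cases hxx : x = x₀
  · simp only [hxx, sub_self, norm_zero]
    have hσ : 0 ≤ σ := le_trans (norm_nonneg _) hfeas
    positivity
  · have hne : x - x₀ ≠ 0 := sub_ne_zero.mpr hxx
    have hnrm : (0:ℝ) < ‖x - x₀‖ := norm_pos_iff.mpr hne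
    set v : EuclideanSpace ℂ (Fin N) := (‖x - x₀‖⁻¹ : ℂ) • (x - x₀) with hv
    have hvnorm : ‖v‖ = 1 := by
      rw [hv, norm_smul]
      simp [hnrm.ne']
    have hvs : sparsity v ≤ 2 * k := by
      rw [hv, sparsity_smul]
      · calc sparsity (x - x₀) ≤ sparsity x + sparsity x₀ := sparsity_sub_le x x₀
          _ ≤ k + k := add_le_add hsx hx₀
          _ = 2 * k := (two_mul k).symm
      · exact_mod_cast inv_ne_zero hnrm.ne'
    have hmem : ‖A v‖ ∈ {r : ℝ | ∃ w : EuclideanSpace ℂ (Fin N),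
        ‖w‖ = 1 ∧ sparsity w ≤ 2 * k ∧ r = ‖A w‖} := ⟨v, hvnorm, hvs, rfl⟩
    have hbdd : BddBelow {r : ℝ | ∃ w : EuclideanSpace ℂ (Fin N),
        ‖w‖ = 1 ∧ sparsity w ≤ 2 * k ∧ r = ‖A w‖} := by
      refine ⟨0, ?_⟩
      rintro r ⟨w, -, -, rfl⟩
      exact norm_nonneg _
    have hεle : ε ≤ ‖A v‖ := hε ▸ csInf_le hbdd hmem
    have hAv : ‖A (x - x₀)‖ = ‖x - x₀‖ * ‖A v‖ := by
      have : A (x - x₀) = (‖x - x₀‖ : ℂ) • A v := by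
        rw [hv, map_smul, smul_smul]
        rw [mul_inv_cancel₀ (by exact_mod_cast hnrm.ne' : ((‖x - x₀‖ : ℝ) : ℂ) ≠ 0)]
        simp
      rw [this, norm_smul]
      simp
    have hkey : ε * ‖x - x₀‖ ≤ 2 * σ := by
      calc ε * ‖x - x₀‖ ≤ ‖A v‖ * ‖x - x₀‖ := by
            exact mul_le_mul_of_nonneg_right hεle (norm_nonneg _)
        _ = ‖A (x - x₀)‖ := by rw [hAv, mul_comm]
        _ = ‖(f - A x₀) - (f - A x)‖ := by rw [map_sub]; congr 1; abel
        _ ≤ ‖f - A x₀‖ + ‖f - A x‖ := norm_sub_le _ _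
        _ ≤ σ + σ := add_le_add hx₀feas hfeas
        _ = 2 * σ := (two_mul σ).symm
    rw [div_mul_eq_mul_div, le_div_iff₀ hεpos, mul_comm]
    exact hkey
end

section
/- If [A b] is a matrix whose columns all have unit norm, then its smallest singular value satisfies σ_min([A b]) ≤ sin ∠(b, Ran A) = ‖b − P_A b‖, where P_A is the orthogonal projection onto the range of A. -/
/-- The smallest singular value of [A b], a family of unit-norm columns a i
together with an extra unit-norm column b, is at most
sin ∠(b, Ran A) = ‖b − P_A b‖ = dist(b, span a). -/
theorem stmt6 {H : Type*} [NormedAddCommGroup H] [InnerProductSpace ℂ H] {N : ℕ}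
    (a : Fin N → H) (b : H) (ha : ∀ i, ‖a i‖ = 1) (hb : ‖b‖ = 1) :
    sInf {r : ℝ | ∃ v : EuclideanSpace ℂ (Fin (N + 1)), ‖v‖ = 1 ∧
        r = ‖(∑ i : Fin N, v i.castSucc • a i) + v (Fin.last N) • b‖}
      ≤ Metric.infDist b (Submodule.span ℂ (Set.range a) : Set H) := by
  set S := {r : ℝ | ∃ v : EuclideanSpace ℂ (Fin (N + 1)), ‖v‖ = 1 ∧
        r = ‖(∑ i : Fin N, v i.castSucc • a i) + v (Fin.last N) • b‖} with hS
  have hbdd : BddBelow S := by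
    refine ⟨0, fun r hr => ?_⟩
    obtain ⟨v, _, rfl⟩ := hr
    exact norm_nonneg _
  have key : ∀ p ∈ Submodule.span ℂ (Set.range a), sInf S ≤ ‖b - p‖ := by
    intro p hp
    obtain ⟨c, hc⟩ := (Submodule.mem_span_range_iff_exists_fun ℂ).mp hp
    set w : EuclideanSpace ℂ (Fin (N + 1)) := WithLp.toLp 2 (Fin.snoc (α := fun _ => ℂ) (fun j => -c j) 1) with hw
    have hwlast : w (Fin.last N) = 1 := by rw [hw]; exact Fin.snoc_last (α := fun _ => ℂ) (1 : ℂ) (fun j => -c j)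
    have hwcast : ∀ i : Fin N, w i.castSucc = -c i := fun i => by rw [hw]; exact Fin.snoc_castSucc (α := fun _ => ℂ) (1 : ℂ) (fun j => -c j) i
    have hw1 : (1 : ℝ) ≤ ‖w‖ := by
      have := EuclideanSpace.norm_eq w
      rw [this]
      have hle : (1 : ℝ) ≤ ∑ i, ‖w i‖ ^ 2 := by
        have := Finset.single_le_sum (f := fun i => ‖w i‖ ^ 2)
          (fun i _ => by positivity) (Finset.mem_univ (Fin.last N))
        simpa [hwlast] using this
      calc (1 : ℝ) = Real.sqrt 1 := (Real.sqrt_one).symm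
        _ ≤ Real.sqrt (∑ i, ‖w i‖ ^ 2) := Real.sqrt_le_sqrt hle
    have hwne : ‖w‖ ≠ 0 := by positivity
    set v : EuclideanSpace ℂ (Fin (N + 1)) := ((‖w‖ : ℂ))⁻¹ • w with hv
    have hvnorm : ‖v‖ = 1 := by
      rw [hv, norm_smul, norm_inv, Complex.norm_real, Real.norm_eq_abs,
        abs_of_nonneg (norm_nonneg w), inv_mul_cancel₀ hwne]
    have hvi : ∀ i, v i = ((‖w‖ : ℂ))⁻¹ * w i := fun i => rfl
    have hmem : ‖(∑ i : Fin N, v i.castSucc • a i) + v (Fin.last N) • b‖ ∈ S :=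
      ⟨v, hvnorm, rfl⟩
    have hval : ‖(∑ i : Fin N, v i.castSucc • a i) + v (Fin.last N) • b‖
        = ‖w‖⁻¹ * ‖b - p‖ := by
      have : (∑ i : Fin N, v i.castSucc • a i) + v (Fin.last N) • b
          = ((‖w‖ : ℂ))⁻¹ • (b - p) := by
        simp only [hvi, hwlast, hwcast, mul_smul, ← Finset.smul_sum, ← smul_add]
        congr 1
        simp only [neg_smul, Finset.sum_neg_distrib, hc]
        module
      rw [this, norm_smul, norm_inv, Complex.norm_real, Real.norm_eq_abs,
        abs_of_nonneg (norm_nonneg w)]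
    have hle : ‖w‖⁻¹ * ‖b - p‖ ≤ ‖b - p‖ := by
      have h1 : ‖w‖⁻¹ ≤ 1 := by
        rw [inv_le_one_iff₀]; right; exact hw1
      nlinarith [norm_nonneg (b - p), inv_nonneg.mpr (norm_nonneg w)]
    calc sInf S ≤ _ := csInf_le hbdd hmem
      _ = ‖w‖⁻¹ * ‖b - p‖ := hval
      _ ≤ ‖b - p‖ := hle
  rw [Metric.infDist_eq_iInf]
  have : Nonempty (Submodule.span ℂ (Set.range a) : Set H) :=
    ⟨⟨0, Submodule.zero_mem _⟩⟩
  refine le_ciInf fun y => ?_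
  rw [dist_eq_norm]
  exact key y y.2
end

section
/- For 0 < y < 1 and c = sin(πy/2), the conformal map φ(w) = w(cw+1)/(w+c) maps the unit circle onto the circle arc Γ = { z : |z| = 1, −πy ≤ arg z ≤ πy }, covering it twice; i.e., as θ ranges over [−π, π], the argument 2·arg(e^{iθ} + 1/c) of φ(e^{iθ}) covers [−πy, πy] exactly twice. -/
open Real

private lemma expI (θ : ℝ) :
    Complex.exp (Complex.I * θ) = (Real.cos θ : ℂ) + (Real.sin θ : ℂ) * Complex.I := by
  rw [mul_comm, Complex.exp_mul_I, ← Complex.ofReal_cos, ← Complex.ofReal_sin]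

private lemma theta_unique {θ₁ θ₂ : ℝ} (h1 : θ₁ ∈ Set.Ico (-π) π) (h2 : θ₂ ∈ Set.Ico (-π) π)
    (h : Complex.exp (Complex.I * θ₁) = Complex.exp (Complex.I * θ₂)) : θ₁ = θ₂ := by
  obtain ⟨n, hn⟩ := Complex.exp_eq_exp_iff_exists_int.1 h
  have him : θ₁ = θ₂ + n * (2 * π) := by
    have := congrArg Complex.im hn
    simpa using this
  obtain ⟨a1, b1⟩ := h1
  obtain ⟨a2, b2⟩ := h2
  have hπ := Real.pi_pos
  have hn0 : n = 0 := by
    have h1' : (n : ℝ) < 1 := by nlinarith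
    have h2' : (-1 : ℝ) < n := by nlinarith
    have ha : (-1 : ℤ) < n := by exact_mod_cast h2'
    have hb : n < (1 : ℤ) := by exact_mod_cast h1'
    omega
  rw [hn0] at him; push_cast at him; linarith

private lemma exists_theta {w : ℂ} (hw : ‖w‖ = 1) :
    ∃ θ ∈ Set.Ico (-π) π, Complex.exp (Complex.I * θ) = w := by
  have h0 := Complex.norm_mul_exp_arg_mul_I w
  rw [hw] at h0
  simp only [Complex.ofReal_one, one_mul] at h0
  rcases lt_or_eq_of_le (Complex.arg_le_pi w) with h | h
  · exact ⟨w.arg, ⟨(Complex.neg_pi_lt_arg w).le, h⟩, by rw [mul_comm]; exact h0⟩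
  · refine ⟨-π, ⟨le_refl _, by linarith [Real.pi_pos]⟩, ?_⟩
    rw [← h0, h, Complex.exp_eq_exp_iff_exists_int]
    exact ⟨-1, by push_cast; ring⟩

private lemma arg_r_exp {r α : ℝ} (hr : 0 < r) (hα1 : -π < α) (hα2 : α ≤ π) :
    ((r : ℂ) * Complex.exp ((α : ℂ) * Complex.I)).arg = α := by
  rw [Complex.arg_real_mul _ hr, Complex.exp_mul_I]
  exact_mod_cast Complex.arg_cos_add_sin_mul_I ⟨hα1, hα2⟩

set_option maxHeartbeats 2000000 in
/-- As θ ranges over [−π, π), the argument 2·arg(e^{iθ} + 1/c) of φ(e^{iθ}) covers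
the interval [−πy, πy] (the arc Γ), and covers each interior value exactly twice. -/
theorem stmt9 (y : ℝ) (hy0 : 0 < y) (hy1 : y < 1)
    (c : ℝ) (hc : c = Real.sin (π * y / 2)) :
    (∀ θ : ℝ, 2 * (Complex.exp (Complex.I * θ) + 1 / (c : ℂ)).arg ∈
      Set.Icc (-(π * y)) (π * y)) ∧
    (∀ t ∈ Set.Icc (-(π * y)) (π * y), ∃ θ ∈ Set.Ico (-π) π,
      2 * (Complex.exp (Complex.I * θ) + 1 / (c : ℂ)).arg = t) ∧
    (∀ t ∈ Set.Ioo (-(π * y)) (π * y),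
      Set.ncard {θ : ℝ | θ ∈ Set.Ico (-π) π ∧
        2 * (Complex.exp (Complex.I * θ) + 1 / (c : ℂ)).arg = t} = 2) := by
  have hπ := Real.pi_pos
  have hs0 : 0 < π * y / 2 := by positivity
  have hs1 : π * y / 2 < π / 2 := by nlinarith
  have hc0 : 0 < c := by
    rw [hc]; exact Real.sin_pos_of_pos_of_lt_pi hs0 (by linarith)
  have hc1 : c < 1 := by
    rw [hc]
    calc Real.sin (π * y / 2) < Real.sin (π / 2) := by
          apply Real.strictMonoOn_sin ⟨by linarith, hs1.le⟩ ⟨by linarith, le_refl _⟩ hs1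
      _ = 1 := Real.sin_pi_div_two
  have hcast : (1 / (c : ℂ)) = ((1 / c : ℝ) : ℂ) := by push_cast; ring
  have hinv : 1 < 1 / c := by rw [lt_div_iff₀ hc0]; linarith
  -- real/imag parts of z θ
  have hre : ∀ θ : ℝ, (Complex.exp (Complex.I * θ) + 1 / (c : ℂ)).re = Real.cos θ + 1 / c := by
    intro θ; rw [expI, hcast]; simp [Complex.cos_ofReal_re, Complex.sin_ofReal_re]
  have him : ∀ θ : ℝ, (Complex.exp (Complex.I * θ) + 1 / (c : ℂ)).im = Real.sin θ := by
    intro θ; rw [expI, hcast]; simp [Complex.cos_ofReal_re, Complex.sin_ofReal_re]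
  have hrepos : ∀ θ : ℝ, 0 < (Complex.exp (Complex.I * θ) + 1 / (c : ℂ)).re := by
    intro θ; rw [hre]; have := Real.neg_one_le_cos θ; linarith
  -- Part 1
  have part1 : ∀ θ : ℝ, 2 * (Complex.exp (Complex.I * θ) + 1 / (c : ℂ)).arg ∈
      Set.Icc (-(π * y)) (π * y) := by
    intro θ
    set z := Complex.exp (Complex.I * θ) + 1 / (c : ℂ) with hz
    have hz0 : z ≠ 0 := by
      intro h
      have h0 := hrepos θ
      rw [← hz, h] at h0
      simp at h0
    set m := ‖z‖ with hmdef
    have hm0 : 0 < m := norm_pos_iff.mpr hz0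
    have hm2 : m ^ 2 = (Real.cos θ + 1 / c) ^ 2 + Real.sin θ ^ 2 := by
      rw [hmdef, Complex.sq_norm, Complex.normSq_apply, hre, him]; ring
    have hpyth : Real.sin θ ^ 2 + Real.cos θ ^ 2 = 1 := Real.sin_sq_add_cos_sq θ
    have hcc : c * (1 / c) = 1 := by field_simp
    have key : (c * m) ^ 2 = (Real.cos θ + c) ^ 2 + Real.sin θ ^ 2 := by
      have h1 : (c * m) ^ 2 = (c * (Real.cos θ + 1 / c)) ^ 2 + c ^ 2 * Real.sin θ ^ 2 := by
        rw [mul_pow, hm2]; ring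
      have h2 : c * (Real.cos θ + 1 / c) = c * Real.cos θ + 1 := by
        rw [mul_add, hcc]
      rw [h1, h2]; nlinarith [hpyth]
    have hcm : 0 ≤ c * m := by positivity
    have hup : Real.sin θ ≤ c * m := by nlinarith [key, sq_nonneg (Real.cos θ + c)]
    have hlo : -(c * m) ≤ Real.sin θ := by nlinarith [key, sq_nonneg (Real.cos θ + c)]
    have harg : z.arg = Real.arcsin (Real.sin θ / m) := by
      rw [Complex.arg_of_re_nonneg (hrepos θ).le, him]
    have harcc : Real.arcsin c = π * y / 2 := by
      rw [hc]; exact Real.arcsin_sin (by linarith) (by linarith)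
    have hq1 : Real.sin θ / m ≤ c := by rw [div_le_iff₀ hm0]; linarith
    have hq2 : -c ≤ Real.sin θ / m := by rw [le_div_iff₀ hm0]; linarith
    have hub : z.arg ≤ π * y / 2 := by
      rw [harg, ← harcc]; exact Real.monotone_arcsin hq1
    have hlb : -(π * y / 2) ≤ z.arg := by
      rw [harg, ← harcc, ← Real.arcsin_neg]; exact Real.monotone_arcsin hq2
    exact ⟨by linarith, by linarith⟩
  -- quadratic identity
  have quad : ∀ α d : ℝ, d ^ 2 = c ^ 2 - Real.sin α ^ 2 →
      ((Real.cos α + d) / c * Real.cos α - 1 / c) ^ 2 +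
        ((Real.cos α + d) / c * Real.sin α) ^ 2 = 1 := by
    intro α d hd
    have h1 : Real.sin α ^ 2 + Real.cos α ^ 2 = 1 := Real.sin_sq_add_cos_sq α
    field_simp
    linear_combination (d ^ 2 + 2 * d * Real.cos α + Real.cos α ^ 2 - 1) * h1 + hd
  -- the key constructor: from a positive root r of the quadratic, produce θ
  have main : ∀ α : ℝ, -π < α → α ≤ π → ∀ r : ℝ, 0 < r →
      (r * Real.cos α - 1 / c) ^ 2 + (r * Real.sin α) ^ 2 = 1 →
      ∃ θ ∈ Set.Ico (-π) π,
        Complex.exp (Complex.I * θ) = (r : ℂ) * Complex.exp ((α : ℂ) * Complex.I) - 1 / (c : ℂ) ∧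
        2 * (Complex.exp (Complex.I * θ) + 1 / (c : ℂ)).arg = 2 * α := by
    intro α hα1 hα2 r hr hE
    set w := (r : ℂ) * Complex.exp ((α : ℂ) * Complex.I) - 1 / (c : ℂ) with hw
    have hwre : w.re = r * Real.cos α - 1 / c := by
      rw [hw, hcast, Complex.exp_mul_I, ← Complex.ofReal_cos, ← Complex.ofReal_sin]
      simp [Complex.cos_ofReal_re, Complex.sin_ofReal_re]
    have hwim : w.im = r * Real.sin α := by
      rw [hw, hcast, Complex.exp_mul_I, ← Complex.ofReal_cos, ← Complex.ofReal_sin]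
      simp [Complex.cos_ofReal_re, Complex.sin_ofReal_re]
    have habs : ‖w‖ = 1 := by
      have h2 : ‖w‖ ^ 2 = 1 := by
        rw [Complex.sq_norm, Complex.normSq_apply, hwre, hwim]; linear_combination hE
      nlinarith [norm_nonneg w, h2]
    obtain ⟨θ, hθmem, hθeq⟩ := exists_theta habs
    refine ⟨θ, hθmem, hθeq, ?_⟩
    have hadd : Complex.exp (Complex.I * θ) + 1 / (c : ℂ) = (r : ℂ) * Complex.exp ((α : ℂ) * Complex.I) := by
      rw [hθeq, hw]; ring
    rw [hadd, arg_r_exp hr hα1 hα2]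
  -- Part 2
  have part2 : ∀ t ∈ Set.Icc (-(π * y)) (π * y), ∃ θ ∈ Set.Ico (-π) π,
      2 * (Complex.exp (Complex.I * θ) + 1 / (c : ℂ)).arg = t := by
    intro t ht
    obtain ⟨ht1, ht2⟩ := ht
    set α := t / 2 with hα
    have hαs1 : -(π * y / 2) ≤ α := by rw [hα]; linarith
    have hαs2 : α ≤ π * y / 2 := by rw [hα]; linarith
    have hcosα : 0 < Real.cos α :=
      Real.cos_pos_of_mem_Ioo ⟨by linarith, by linarith⟩
    have hsin1 : Real.sin α ≤ c := by
      rw [hc]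
      exact (Real.strictMonoOn_sin.monotoneOn ⟨by linarith, by linarith⟩
        ⟨by linarith, by linarith⟩ hαs2)
    have hsin2 : -c ≤ Real.sin α := by
      have := Real.strictMonoOn_sin.monotoneOn (a := -(π * y / 2)) (b := α)
        ⟨by linarith, by linarith⟩ ⟨by linarith, by linarith⟩ hαs1
      rwa [Real.sin_neg, ← hc] at this
    have hd2 : Real.sqrt (c ^ 2 - Real.sin α ^ 2) ^ 2 = c ^ 2 - Real.sin α ^ 2 :=
      Real.sq_sqrt (by nlinarith)
    set D := Real.sqrt (c ^ 2 - Real.sin α ^ 2) with hD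
    have hD0 : 0 ≤ D := Real.sqrt_nonneg _
    have hr : 0 < (Real.cos α + D) / c := by positivity
    obtain ⟨θ, hθmem, _, hθarg⟩ :=
      main α (by linarith) (by linarith) _ hr (quad α D hd2)
    exact ⟨θ, hθmem, by rw [hθarg, hα]; ring⟩
  refine ⟨part1, part2, ?_⟩
  -- Part 3
  intro t ht
  obtain ⟨ht1, ht2⟩ := ht
  set α := t / 2 with hα
  have hαs1 : -(π * y / 2) < α := by rw [hα]; linarith
  have hαs2 : α < π * y / 2 := by rw [hα]; linarith
  have hcosα : 0 < Real.cos α :=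
    Real.cos_pos_of_mem_Ioo ⟨by linarith, by linarith⟩
  have hsin1 : Real.sin α < c := by
    rw [hc]
    exact Real.strictMonoOn_sin ⟨by linarith, by linarith⟩
      ⟨by linarith, by linarith⟩ hαs2
  have hsin2 : -c < Real.sin α := by
    have := Real.strictMonoOn_sin (a := -(π * y / 2)) (b := α)
      ⟨by linarith, by linarith⟩ ⟨by linarith, by linarith⟩ hαs1
    rwa [Real.sin_neg, ← hc] at this
  have hd2 : Real.sqrt (c ^ 2 - Real.sin α ^ 2) ^ 2 = c ^ 2 - Real.sin α ^ 2 :=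
    Real.sq_sqrt (by nlinarith)
  set D := Real.sqrt (c ^ 2 - Real.sin α ^ 2) with hDdef
  have hD0 : 0 < D := Real.sqrt_pos.2 (by nlinarith)
  have hDcos : D < Real.cos α := by nlinarith [hd2, Real.sin_sq_add_cos_sq α]
  set r₁ := (Real.cos α + D) / c with hr₁def
  set r₂ := (Real.cos α + -D) / c with hr₂def
  have hr₁ : 0 < r₁ := by positivity
  have hr₂ : 0 < r₂ := by
    rw [hr₂def]
    apply div_pos (by linarith) hc0
  have hπα1 : -π < α := by linarith
  have hπα2 : α ≤ π := by linarith
  obtain ⟨θ₁, hθ₁mem, hθ₁eq, hθ₁arg⟩ := main α hπα1 hπα2 r₁ hr₁ (quad α D hd2)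
  obtain ⟨θ₂, hθ₂mem, hθ₂eq, hθ₂arg⟩ :=
    main α hπα1 hπα2 r₂ hr₂ (quad α (-D) (by rw [neg_pow]; simpa using hd2))
  have hr12 : r₁ ≠ r₂ := by
    rw [hr₁def, hr₂def]
    intro h
    rw [div_eq_div_iff hc0.ne' hc0.ne'] at h
    nlinarith
  have hθ12 : θ₁ ≠ θ₂ := by
    intro h
    rw [h, hθ₂eq] at hθ₁eq
    field_simp at hθ₁eq
    have h' : (r₁ : ℂ) * Complex.exp (↑α * Complex.I) = r₂ * Complex.exp (↑α * Complex.I) := by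
      linear_combination -hθ₁eq
    exact hr12 (by exact_mod_cast mul_right_cancel₀ (Complex.exp_ne_zero _) h')
  have hset : {θ : ℝ | θ ∈ Set.Ico (-π) π ∧
      2 * (Complex.exp (Complex.I * θ) + 1 / (c : ℂ)).arg = t} = {θ₁, θ₂} := by
    ext θ
    simp only [Set.mem_setOf_eq, Set.mem_insert_iff, Set.mem_singleton_iff]
    constructor
    · rintro ⟨hmem, heq⟩
      set z := Complex.exp (Complex.I * θ) + 1 / (c : ℂ) with hz
      have hz0 : z ≠ 0 := by
        intro h
        have h0 := hrepos θ
        rw [← hz, h] at h0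
        simp at h0
      set R := ‖z‖ with hRdef
      have hR0 : 0 < R := norm_pos_iff.mpr hz0
      have hargz : z.arg = α := by rw [hα]; linarith
      have hzeq : (R : ℂ) * Complex.exp ((α : ℂ) * Complex.I) = z := by
        have := Complex.norm_mul_exp_arg_mul_I z
        rwa [hargz] at this
      have hexpθ : Complex.exp (Complex.I * θ) =
          (R : ℂ) * Complex.exp ((α : ℂ) * Complex.I) - 1 / (c : ℂ) := by
        rw [hzeq, hz]; ring
      have habs1 : ‖Complex.exp (Complex.I * θ)‖ = 1 := by
        rw [mul_comm]; exact Complex.norm_exp_ofReal_mul_I θ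
      have hEq : (R * Real.cos α - 1 / c) ^ 2 + (R * Real.sin α) ^ 2 = 1 := by
        have h2 : ‖Complex.exp (Complex.I * θ)‖ ^ 2 = 1 := by
          rw [habs1]; norm_num
        rw [hexpθ, Complex.sq_norm, Complex.normSq_apply] at h2
        have hwre : ((R : ℂ) * Complex.exp ((α : ℂ) * Complex.I) - 1 / (c : ℂ)).re
            = R * Real.cos α - 1 / c := by
          rw [hcast, Complex.exp_mul_I, ← Complex.ofReal_cos, ← Complex.ofReal_sin]; simp [Complex.cos_ofReal_re, Complex.sin_ofReal_re]
        have hwim : ((R : ℂ) * Complex.exp ((α : ℂ) * Complex.I) - 1 / (c : ℂ)).im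
            = R * Real.sin α := by
          rw [hcast, Complex.exp_mul_I, ← Complex.ofReal_cos, ← Complex.ofReal_sin]; simp [Complex.cos_ofReal_re, Complex.sin_ofReal_re]
        rw [hwre, hwim] at h2
        linear_combination h2
      have h1 : Real.sin α ^ 2 + Real.cos α ^ 2 = 1 := Real.sin_sq_add_cos_sq α
      have hcc : c * (1 / c) = 1 := by field_simp
      have hEq' : (c * R * Real.cos α - 1) ^ 2 + (c * R * Real.sin α) ^ 2 = c ^ 2 := by
        linear_combination (c ^ 2) * hEq + (2 * c * R * Real.cos α - 1 - c * (1 / c)) * hcc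
      have hfac' : (c * R - (Real.cos α + D)) * (c * R - (Real.cos α - D)) = 0 := by
        linear_combination hEq' + (1 - c ^ 2 * R ^ 2) * h1 - hd2
      have hfac : (R - r₁) * (R - r₂) = 0 := by
        have h3 : (R - r₁) * (R - r₂) =
            (c * R - (Real.cos α + D)) * (c * R - (Real.cos α - D)) / c ^ 2 := by
          rw [hr₁def, hr₂def]; field_simp; ring
        rw [h3, hfac', zero_div]
      rcases mul_eq_zero.1 hfac with h | h
      · left
        have hRr : R = r₁ := by linarith [sub_eq_zero.1 h]
        apply theta_unique hmem hθ₁mem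
        rw [hexpθ, hRr, ← hθ₁eq]
      · right
        have hRr : R = r₂ := by linarith [sub_eq_zero.1 h]
        apply theta_unique hmem hθ₂mem
        rw [hexpθ, hRr, ← hθ₂eq]
    · rintro (h | h)
      · exact h ▸ ⟨hθ₁mem, by rw [hθ₁arg, hα]; ring⟩
      · exact h ▸ ⟨hθ₂mem, by rw [hθ₂arg, hα]; ring⟩
  rw [hset]
  exact Set.ncard_pair hθ12
end

section
/- Let ⟨f,g⟩ = (1/L)∫_Γ f(z) conj(g(z)) |dz| be the normalized arclength inner product on the circle arc Γ = {e^{iθ} : −πy ≤ θ ≤ πy} with L = 2πy, and let k_n be the leading coefficient of the n-th orthonormal polynomial. Then with c = sin(πy/2), one has k_n⁻² ≥ (c/(2y)) c^{2n}. -/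
open Real Polynomial

namespace Stmt13Aux

open Complex Set



lemma q_re (c : ℝ) (u : ℂ) : (u^2 + 2*(c:ℂ)*u + 1).re = u.re^2 - u.im^2 + 2*c*u.re + 1 := by
  simp [pow_two, Complex.mul_re, Complex.mul_im, Complex.add_re]

lemma q_im (c : ℝ) (u : ℂ) : (u^2 + 2*(c:ℂ)*u + 1).im = 2*u.im*(u.re + c) := by
  simp [pow_two, Complex.mul_re, Complex.mul_im, Complex.add_im]
  ring

lemma sq_abs_le {u : ℂ} (hu : ‖u‖ ≤ 1) : u.re^2 + u.im^2 ≤ 1 := by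
  have h1 : ‖u‖ ^ 2 ≤ 1 := by nlinarith [norm_nonneg u]
  rw [Complex.sq_norm, Complex.normSq_apply] at h1
  nlinarith

lemma sq_abs_lt {u : ℂ} (hu : ‖u‖ < 1) : u.re^2 + u.im^2 < 1 := by
  have h1 : ‖u‖ ^ 2 < 1 := by nlinarith [norm_nonneg u]
  rw [Complex.sq_norm, Complex.normSq_apply] at h1
  nlinarith

lemma q_slit {c : ℝ} (hc0 : 0 < c) (hc1 : c < 1) {u : ℂ} (hu : ‖u‖ < 1) :
    (u^2 + 2*(c:ℂ)*u + 1) ∈ Complex.slitPlane := by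
  rw [Complex.mem_slitPlane_iff]
  have hsq := sq_abs_lt hu
  by_cases him : (u^2 + 2*(c:ℂ)*u + 1).im = 0
  · left
    rw [q_im] at him
    rw [q_re]
    rcases mul_eq_zero.1 him with h | h
    · have hb : u.im = 0 := by
        rcases mul_eq_zero.1 h with h' | h' <;> [linarith; exact h']
      nlinarith [sq_nonneg (u.re + c), mul_pos (by linarith : (0:ℝ) < 1 - c) (by linarith : (0:ℝ) < 1 + c)]
    · have ha : u.re = -c := by linarith
      nlinarith
  · right; exact him

lemma q_re_nonneg_or {c : ℝ} (hc0 : 0 < c) (hc1 : c < 1) {u : ℂ} (hu : ‖u‖ ≤ 1) :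
    0 ≤ (u^2 + 2*(c:ℂ)*u + 1).re ∨ (u^2 + 2*(c:ℂ)*u + 1).im ≠ 0 := by
  have hsq := sq_abs_le hu
  by_cases him : (u^2 + 2*(c:ℂ)*u + 1).im = 0
  · left
    rw [q_im] at him
    rw [q_re]
    rcases mul_eq_zero.1 him with h | h
    · have hb : u.im = 0 := by
        rcases mul_eq_zero.1 h with h' | h' <;> [linarith; exact h']
      nlinarith [sq_nonneg (u.re + c), mul_pos (by linarith : (0:ℝ) < 1 - c) (by linarith : (0:ℝ) < 1 + c)]
    · have ha : u.re = -c := by linarith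
      nlinarith
  · right; exact him


noncomputable def Nq (c : ℝ) (n : ℕ) (p : Polynomial ℂ) : Polynomial ℂ :=
  ∑ k ∈ Finset.range (n+1), Polynomial.C (p.coeff k) * X^(n-k) *
    (X + Polynomial.C (c:ℂ))^k * (1 + Polynomial.C (c:ℂ) * X)^(n-k)

noncomputable def Gf (c : ℝ) (n : ℕ) (p : Polynomial ℂ) (u : ℂ) : ℂ :=
  ((Nq c n p).eval u * (u^2 + 2*(c:ℂ)*u + 1) ^ ((1:ℂ)/2)) / (1 + (c:ℂ)*u)^(n+1)

lemma denom_ne {c : ℝ} (hc0 : 0 < c) (hc1 : c < 1) {u : ℂ} (hu : ‖u‖ ≤ 1) :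
    (1 + (c:ℂ)*u) ≠ 0 := by
  intro h
  have h1 : ‖(c:ℂ)*u‖ = c * ‖u‖ := by
    rw [norm_mul, Complex.norm_real, Real.norm_eq_abs, abs_of_pos hc0]
  have h2 : (c:ℂ)*u = -1 := by linear_combination h
  rw [h2] at h1
  simp at h1
  nlinarith

lemma Gf_zero {c : ℝ} {n : ℕ} {p : Polynomial ℂ} (hmonic : p.Monic) (hdeg : p.natDegree = n) :
    Gf c n p 0 = (c:ℂ)^n := by
  have hN : (Nq c n p).eval 0 = (c:ℂ)^n := by
    rw [Nq, Polynomial.eval_finset_sum]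
    rw [Finset.sum_eq_single n]
    · have h1 : p.coeff n = 1 := by rw [← hdeg]; exact hmonic.coeff_natDegree
      simp [h1]
    · intro k hk hkn
      have hklt : k < n := lt_of_le_of_ne (Nat.lt_succ_iff.1 (Finset.mem_range.1 hk)) hkn
      simp [Nat.sub_ne_zero_of_lt hklt]
    · intro h; exact absurd (Finset.self_mem_range_succ n) h
  simp [Gf, hN]

lemma Nq_eval {c : ℝ} {n : ℕ} {p : Polynomial ℂ} (hdeg : p.natDegree = n) {u : ℂ}
    (hu : u ≠ 0) (hd : (1 + (c:ℂ)*u) ≠ 0) :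
    (Nq c n p).eval u = (u*(1+(c:ℂ)*u))^n * p.eval ((u + (c:ℂ))/(u*(1+(c:ℂ)*u))) := by
  conv_rhs => rw [Polynomial.eval_eq_sum_range, hdeg, Finset.mul_sum]
  rw [Nq, Polynomial.eval_finset_sum]
  refine Finset.sum_congr rfl fun k hk => ?_
  have hkn : k ≤ n := Nat.lt_succ_iff.1 (Finset.mem_range.1 hk)
  have hpow : (u*(1+(c:ℂ)*u))^n = (u*(1+(c:ℂ)*u))^k * (u*(1+(c:ℂ)*u))^(n-k) := by
    rw [← pow_add, Nat.add_sub_cancel' hkn]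
  simp only [Polynomial.eval_mul, Polynomial.eval_pow, Polynomial.eval_add, Polynomial.eval_C,
    Polynomial.eval_X, Polynomial.eval_one]
  rw [hpow, div_pow, mul_pow, mul_pow]
  have hd' : (1 + u*(c:ℂ)) ≠ 0 := by rwa [mul_comm]
  field_simp

lemma Gf_continuousOn {c : ℝ} (hc0 : 0 < c) (hc1 : c < 1) (n : ℕ) (p : Polynomial ℂ) :
    ContinuousOn (Gf c n p) (Metric.closedBall 0 1) := by
  intro u hu
  have habs : ‖u‖ ≤ 1 := by
    simpa using Metric.mem_closedBall.1 hu
  apply ContinuousAt.continuousWithinAt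
  have hq : ContinuousAt (fun u : ℂ => u^2 + 2*(c:ℂ)*u + 1) u := by fun_prop
  have hcpow : ContinuousAt (fun u : ℂ => (u^2 + 2*(c:ℂ)*u + 1) ^ ((1:ℂ)/2)) u := by
    exact Filter.Tendsto.comp (Complex.continuousAt_cpow_const_of_re_pos
      (q_re_nonneg_or hc0 hc1 habs) (by norm_num)) hq
  have hden : ((1 + (c:ℂ)*u)^(n+1)) ≠ 0 := pow_ne_zero _ (denom_ne hc0 hc1 habs)
  exact (((Polynomial.continuous _).continuousAt.mul hcpow).div (by fun_prop) hden)

lemma Gf_differentiableAt {c : ℝ} (hc0 : 0 < c) (hc1 : c < 1) (n : ℕ) (p : Polynomial ℂ)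
    {u : ℂ} (hu : ‖u‖ < 1) : DifferentiableAt ℂ (Gf c n p) u := by
  have hq : DifferentiableAt ℂ (fun u : ℂ => u^2 + 2*(c:ℂ)*u + 1) u := by fun_prop
  have hcpow : DifferentiableAt ℂ (fun u : ℂ => (u^2 + 2*(c:ℂ)*u + 1) ^ ((1:ℂ)/2)) u :=
    hq.cpow (differentiableAt_const _) (q_slit hc0 hc1 hu)
  have hden : ((1 + (c:ℂ)*u)^(n+1)) ≠ 0 := pow_ne_zero _ (denom_ne hc0 hc1 hu.le)
  exact (((Polynomial.differentiableAt _).mul hcpow).div (by fun_prop) hden)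

lemma Gf_circle_integral {c : ℝ} (hc0 : 0 < c) (hc1 : c < 1) {n : ℕ} {p : Polynomial ℂ}
    (hmonic : p.Monic) (hdeg : p.natDegree = n) :
    ∫ φ in (0:ℝ)..(2*π), Gf c n p (circleMap 0 1 φ) = 2*π*(c:ℂ)^n := by
  have key := Complex.circleIntegral_sub_inv_smul_of_differentiable_on_off_countable
    (s := ∅) Set.countable_empty (Metric.mem_ball_self one_pos)
    (Gf_continuousOn hc0 hc1 n p)
    (fun x hx => Gf_differentiableAt hc0 hc1 n p
      (by simpa using Metric.mem_ball.1 hx.1))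
  rw [circleIntegral] at key
  simp only [deriv_circleMap, sub_zero, smul_eq_mul] at key
  have h1 : ∀ φ : ℝ, circleMap 0 1 φ * Complex.I * ((circleMap 0 1 φ)⁻¹ * Gf c n p (circleMap 0 1 φ))
      = Complex.I * Gf c n p (circleMap 0 1 φ) := by
    intro φ
    have hz : circleMap 0 1 φ ≠ 0 := by
      intro h
      have := norm_circleMap_zero 1 φ
      rw [h] at this; simp at this
    field_simp
  simp only [h1] at key
  rw [intervalIntegral.integral_const_mul] at key
  rw [Gf_zero hmonic hdeg] at key
  have hI : (Complex.I : ℂ) ≠ 0 := Complex.I_ne_zero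
  refine mul_left_cancel₀ hI ?_
  rw [key]; ring


lemma Gf_comp_continuous {c : ℝ} (hc0 : 0 < c) (hc1 : c < 1) (n : ℕ) (p : Polynomial ℂ) :
    Continuous (fun φ : ℝ => Gf c n p (circleMap 0 1 φ)) := by
  refine (Gf_continuousOn hc0 hc1 n p).comp_continuous (continuous_circleMap 0 1) fun φ => ?_
  simp [Metric.mem_closedBall, circleMap]

lemma integral_norm_sq_ge {c : ℝ} (hc0 : 0 < c) (hc1 : c < 1) {n : ℕ} {p : Polynomial ℂ}
    (hmonic : p.Monic) (hdeg : p.natDegree = n) :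
    2*π*(c^n)^2 ≤ ∫ φ in (0:ℝ)..(2*π), ‖Gf c n p (circleMap 0 1 φ)‖^2 := by
  have hcn : (0:ℝ) < c^n := pow_pos hc0 n
  have hcont := Gf_comp_continuous hc0 hc1 n p
  have h2π : (0:ℝ) ≤ 2*π := by positivity
  have h1 : 2*π*c^n = ‖∫ φ in (0:ℝ)..(2*π), Gf c n p (circleMap 0 1 φ)‖ := by
    rw [Gf_circle_integral hc0 hc1 hmonic hdeg]
    rw [norm_mul, norm_mul]
    simp [Complex.norm_real, abs_of_pos Real.pi_pos,
      abs_of_pos hc0, norm_pow]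
  have h2 := intervalIntegral.norm_integral_le_integral_norm
    (f := fun φ : ℝ => Gf c n p (circleMap 0 1 φ)) (μ := MeasureTheory.volume) h2π
  have h3 : ∀ φ : ℝ, ‖Gf c n p (circleMap 0 1 φ)‖ ≤
      ‖Gf c n p (circleMap 0 1 φ)‖^2/(2*c^n) + c^n/2 := by
    intro φ
    have h := sq_nonneg (‖Gf c n p (circleMap 0 1 φ)‖ - c^n)
    rw [div_add_div _ _ (by positivity) (by norm_num), le_div_iff₀ (by positivity)]
    nlinarith
  have hi1 : IntervalIntegrable (fun φ : ℝ => ‖Gf c n p (circleMap 0 1 φ)‖)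
      MeasureTheory.volume 0 (2*π) := (hcont.norm).intervalIntegrable _ _
  have hi2 : IntervalIntegrable
      (fun φ : ℝ => ‖Gf c n p (circleMap 0 1 φ)‖^2/(2*c^n) + c^n/2)
      MeasureTheory.volume 0 (2*π) := by
    apply Continuous.intervalIntegrable
    fun_prop
  have h4 := intervalIntegral.integral_mono_on h2π hi1 hi2 (fun φ _ => h3 φ)
  rw [intervalIntegral.integral_add (by apply Continuous.intervalIntegrable; fun_prop)
    (by apply Continuous.intervalIntegrable; fun_prop)] at h4
  rw [intervalIntegral.integral_div, intervalIntegral.integral_const] at h4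
  have h5 : 2*π*c^n ≤ (∫ φ in (0:ℝ)..(2*π), ‖Gf c n p (circleMap 0 1 φ)‖^2)/(2*c^n)
      + (2*π - 0)*(c^n/2) := le_trans (le_of_eq h1) (le_trans h2 h4)
  have h6 : π * c^n ≤ (∫ φ in (0:ℝ)..(2*π), ‖Gf c n p (circleMap 0 1 φ)‖^2)/(2*c^n) := by
    linarith
  have h7 := (le_div_iff₀ (by positivity : (0:ℝ) < 2*c^n)).mp h6
  nlinarith [h7]

noncomputable def θf (c : ℝ) (ψ : ℝ) : ℝ := 2 * Real.arctan (c * Real.sin ψ / (1 + c * Real.cos ψ))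

lemma den1_pos {c : ℝ} (hc0 : 0 < c) (hc1 : c < 1) (ψ : ℝ) : 0 < 1 + c * Real.cos ψ := by
  nlinarith [Real.neg_one_le_cos ψ]

lemma D_pos {c : ℝ} (hc0 : 0 < c) (hc1 : c < 1) (ψ : ℝ) :
    0 < 1 + 2*c*Real.cos ψ + c^2 := by
  nlinarith [Real.neg_one_le_cos ψ, sq_nonneg (1 - c)]

lemma cos_two_arctan (t : ℝ) : Real.cos (2 * Real.arctan t) = (1 - t^2)/(1+t^2) := by
  have h1 : (0:ℝ) < 1 + t^2 := by positivity
  rw [Real.cos_two_mul, Real.cos_arctan, div_pow, one_pow, Real.sq_sqrt h1.le]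
  field_simp
  ring

lemma sin_two_arctan (t : ℝ) : Real.sin (2 * Real.arctan t) = 2*t/(1+t^2) := by
  have h1 : (0:ℝ) < 1 + t^2 := by positivity
  rw [Real.sin_two_mul, Real.sin_arctan, Real.cos_arctan, mul_assoc, div_mul_div_comm,
    Real.mul_self_sqrt h1.le]
  ring

lemma hasDerivAt_θf {c : ℝ} (hc0 : 0 < c) (hc1 : c < 1) (ψ : ℝ) :
    HasDerivAt (θf c) (2*c*(Real.cos ψ + c)/(1 + 2*c*Real.cos ψ + c^2)) ψ := by
  have hd1 : (0:ℝ) < 1 + c * Real.cos ψ := den1_pos hc0 hc1 ψ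
  have hD : (0:ℝ) < 1 + 2*c*Real.cos ψ + c^2 := D_pos hc0 hc1 ψ
  have hsc := Real.sin_sq_add_cos_sq ψ
  have hnum : HasDerivAt (fun ψ => c * Real.sin ψ) (c * Real.cos ψ) ψ :=
    (Real.hasDerivAt_sin ψ).const_mul c
  have hden : HasDerivAt (fun ψ => 1 + c * Real.cos ψ) (-(c * Real.sin ψ)) ψ := by
    have := ((Real.hasDerivAt_cos ψ).const_mul c).const_add 1
    simpa [mul_comm] using this
  have hf := hnum.div hden hd1.ne'
  have h2 := hf.arctan.const_mul 2
  refine h2.congr_deriv ?_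
  have ht2 : 1 + (c * Real.sin ψ / (1 + c * Real.cos ψ))^2
      = (1 + 2*c*Real.cos ψ + c^2)/(1 + c * Real.cos ψ)^2 := by
    field_simp
    linear_combination c^2 * hsc
  have hnum2 : c * Real.cos ψ * (1 + c * Real.cos ψ) - c * Real.sin ψ * -(c * Real.sin ψ)
      = c * (Real.cos ψ + c) := by linear_combination c^2 * hsc
  simp only [Pi.div_apply]
  rw [ht2, hnum2]
  field_simp

lemma ne_zero_of_re_pos {z : ℂ} (h : 0 < z.re) : z ≠ 0 := by
  intro h0; rw [h0] at h; simp at h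

lemma exp_θf {c : ℝ} (hc0 : 0 < c) (hc1 : c < 1) (ψ : ℝ) :
    Complex.exp (Complex.I * (θf c ψ)) =
      (1 + (c:ℂ) * Complex.exp (Complex.I * ψ)) /
        (1 + (c:ℂ) * Complex.exp (-(Complex.I * ψ))) := by
  have hd1 : (0:ℝ) < 1 + c * Real.cos ψ := den1_pos hc0 hc1 ψ
  set t : ℝ := c * Real.sin ψ / (1 + c * Real.cos ψ) with htdef
  have ht : t * (1 + c * Real.cos ψ) = c * Real.sin ψ := by
    rw [htdef]; field_simp
  have h1 : (0:ℝ) < 1 + t^2 := by positivity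
  have e1 : Complex.I * (θf c ψ : ℝ) = ((θf c ψ : ℝ) : ℂ) * Complex.I := mul_comm _ _
  have e2 : Complex.I * (ψ : ℂ) = (ψ : ℂ) * Complex.I := mul_comm _ _
  have e3 : -(Complex.I * (ψ : ℂ)) = ((-ψ : ℝ) : ℂ) * Complex.I := by push_cast; ring
  rw [e1, e3, e2, Complex.exp_mul_I, Complex.exp_mul_I, Complex.exp_mul_I]
  rw [← Complex.ofReal_cos, ← Complex.ofReal_sin, ← Complex.ofReal_cos, ← Complex.ofReal_sin,
    ← Complex.ofReal_cos, ← Complex.ofReal_sin, Real.cos_neg, Real.sin_neg]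
  have hθ : θf c ψ = 2 * Real.arctan t := rfl
  rw [hθ, cos_two_arctan, sin_two_arctan]
  have hne1 : ((1 + t^2 : ℝ) : ℂ) ≠ 0 := by
    exact_mod_cast ne_of_gt h1
  have hne2 : (1 + (c:ℂ) * ((Real.cos ψ : ℂ) + (-Real.sin ψ : ℝ) * Complex.I)) ≠ 0 := by
    apply ne_zero_of_re_pos
    simp [Complex.add_re, Complex.mul_re, Complex.cos_ofReal_re, Complex.sin_ofReal_im,
      Complex.cos_ofReal_im, Complex.sin_ofReal_re]
    nlinarith
  push_cast
  rw [eq_div_iff (by push_cast at hne2 ⊢; convert hne2 using 2)]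
  have htC : (t:ℂ) * (1 + (c:ℂ) * Complex.cos (ψ:ℂ)) = (c:ℂ) * Complex.sin (ψ:ℂ) := by
    rw [← Complex.ofReal_cos, ← Complex.ofReal_sin]
    exact_mod_cast ht
  have hne1C : ((1:ℂ) + (t:ℂ)^2) ≠ 0 := by exact_mod_cast hne1
  field_simp
  linear_combination (2*Complex.I - 2*(t:ℂ)) * htC - 2*(t:ℂ)*(c:ℂ)*Complex.sin (ψ:ℂ) * Complex.I_sq

lemma θf_zero (c : ℝ) : θf c 0 = 0 := by simp [θf]

lemma θf_periodic (c : ℝ) : Function.Periodic (θf c) (2*π) := by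
  intro x; simp [θf, Real.sin_add_two_pi, Real.cos_add_two_pi]

lemma θf_neg (c : ℝ) (ψ : ℝ) : θf c (-ψ) = -(θf c ψ) := by
  simp [θf, Real.sin_neg, Real.cos_neg, neg_div, Real.arctan_neg]

lemma θf_psi0 {c : ℝ} (hc0 : 0 < c) (hc1 : c < 1) :
    θf c (Real.arccos (-c)) = 2 * Real.arcsin c := by
  have hc2 : (0:ℝ) < 1 - c^2 := by nlinarith
  set r : ℝ := Real.sqrt (1 - c^2) with hrdef
  have hr2 : r^2 = 1 - c^2 := Real.sq_sqrt hc2.le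
  have hrpos : 0 < r := Real.sqrt_pos.2 hc2
  have hcos : Real.cos (Real.arccos (-c)) = -c :=
    Real.cos_arccos (by linarith) (by linarith)
  have hsin : Real.sin (Real.arccos (-c)) = r := by
    rw [Real.sin_arccos]; rw [hrdef]; norm_num
  rw [θf, hcos, hsin]
  have ht : c * r / (1 + c * (-c)) = c / r := by
    rw [show 1 + c * (-c) = r^2 by rw [hr2]; ring]
    rw [pow_two]
    field_simp
  rw [ht]
  congr 1
  rw [Real.arctan_eq_arcsin]
  congr 1
  have h1x : 1 + (c/r)^2 = (1/r)^2 := by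
    field_simp
    linarith [hr2]
  rw [h1x, Real.sqrt_sq (by positivity : (0:ℝ) ≤ 1/r)]
  field_simp

lemma cos_add_c_nonneg {c : ℝ} (hc0 : 0 < c) (hc1 : c < 1) {ψ : ℝ}
    (h0 : 0 ≤ ψ) (h1 : ψ ≤ Real.arccos (-c)) : 0 ≤ Real.cos ψ + c := by
  have := Real.cos_le_cos_of_nonneg_of_le_pi h0 (Real.arccos_le_pi (-c)) h1
  rw [Real.cos_arccos (by linarith) (by linarith)] at this
  linarith

lemma cos_add_c_nonpos {c : ℝ} (hc0 : 0 < c) (hc1 : c < 1) {ψ : ℝ}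
    (h1 : Real.arccos (-c) ≤ ψ) (h2 : ψ ≤ 2*π - Real.arccos (-c)) :
    Real.cos ψ + c ≤ 0 := by
  have harc0 := Real.arccos_nonneg (-c)
  have harcπ := Real.arccos_le_pi (-c)
  have hcosval : Real.cos (Real.arccos (-c)) = -c :=
    Real.cos_arccos (by linarith) (by linarith)
  rcases le_or_gt ψ π with hψπ | hψπ
  · have := Real.cos_le_cos_of_nonneg_of_le_pi harc0 hψπ h1
    rw [hcosval] at this
    linarith
  · have hx : Real.cos ψ = Real.cos (2*π - ψ) := by
      rw [Real.cos_two_pi_sub]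
    have h2' : Real.arccos (-c) ≤ 2*π - ψ := by linarith
    have := Real.cos_le_cos_of_nonneg_of_le_pi harc0 (by linarith : 2*π - ψ ≤ π) h2'
    rw [hcosval] at this
    linarith

lemma abs_cpow_half_sq (z : ℂ) : ‖z ^ ((1:ℂ)/2)‖^2 = ‖z‖ := by
  by_cases hz : z = 0
  · rw [hz, Complex.zero_cpow (by norm_num : ((1:ℂ)/2) ≠ 0)]
    simp
  · rw [Complex.norm_cpow_of_ne_zero hz]
    norm_num
    rw [← Real.rpow_natCast (‖z‖ ^ ((1:ℝ)/2)) 2, ← Real.rpow_mul (norm_nonneg z)]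
    norm_num

lemma norm_Gf_boundary {c : ℝ} (hc0 : 0 < c) (hc1 : c < 1) {n : ℕ} {p : Polynomial ℂ}
    (hdeg : p.natDegree = n) (ψ : ℝ) :
    ‖Gf c n p (Complex.exp (-(Complex.I * ψ)))‖^2
      = ‖p.eval (Complex.exp (Complex.I * (θf c ψ)))‖^2 *
        (2*|Real.cos ψ + c| / (1 + 2*c*Real.cos ψ + c^2)) := by
  have hsc := Real.sin_sq_add_cos_sq ψ
  set u : ℂ := Complex.exp (-(Complex.I * ψ)) with hu
  have hu0 : u ≠ 0 := Complex.exp_ne_zero _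
  have habs : ‖u‖ = 1 := by
    rw [hu, Complex.norm_exp]
    simp
  have hprod : u * Complex.exp (Complex.I * ψ) = 1 := by
    rw [hu, ← Complex.exp_add]
    simp
  have hden : (1 + (c:ℂ)*u) ≠ 0 := denom_ne hc0 hc1 habs.le
  have hsum : u + Complex.exp (Complex.I * ψ) = 2*((Real.cos ψ : ℝ):ℂ) := by
    rw [hu, show -(Complex.I * (ψ:ℂ)) = ((-ψ:ℝ):ℂ) * Complex.I by push_cast; ring,
      show Complex.I * (ψ:ℂ) = ((ψ:ℝ):ℂ) * Complex.I by push_cast; ring,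
      Complex.exp_mul_I, Complex.exp_mul_I]
    rw [← Complex.ofReal_cos, ← Complex.ofReal_sin, ← Complex.ofReal_cos, ← Complex.ofReal_sin]
    rw [Real.cos_neg, Real.sin_neg]
    push_cast
    ring
  have hq : u^2 + 2*(c:ℂ)*u + 1 = u * (2*((Real.cos ψ : ℝ):ℂ) + 2*(c:ℂ)) := by
    linear_combination u * hsum - hprod
  have habsq : ‖u^2 + 2*(c:ℂ)*u + 1‖ = 2*|Real.cos ψ + c| := by
    rw [hq, norm_mul, habs, one_mul]
    rw [show (2*((Real.cos ψ : ℝ):ℂ) + 2*(c:ℂ)) = (((2*(Real.cos ψ + c) : ℝ)):ℂ) by push_cast; ring]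
    rw [Complex.norm_real, Real.norm_eq_abs, abs_mul]
    norm_num
  have hure : u.re = Real.cos ψ := by
    rw [hu, show -(Complex.I * (ψ:ℂ)) = ((-ψ:ℝ):ℂ) * Complex.I by push_cast; ring,
      Complex.exp_mul_I, ← Complex.ofReal_cos, ← Complex.ofReal_sin]
    simp [Real.cos_neg, Complex.cos_ofReal_re]
  have huim : u.im = -Real.sin ψ := by
    rw [hu, show -(Complex.I * (ψ:ℂ)) = ((-ψ:ℝ):ℂ) * Complex.I by push_cast; ring,
      Complex.exp_mul_I, ← Complex.ofReal_cos, ← Complex.ofReal_sin]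
    simp [Real.sin_neg, Complex.sin_ofReal_re]
  have habsden : ‖1 + (c:ℂ)*u‖ ^ 2 = 1 + 2*c*Real.cos ψ + c^2 := by
    rw [Complex.sq_norm, Complex.normSq_apply]
    simp [Complex.add_re, Complex.add_im, Complex.mul_re, Complex.mul_im, hure, huim]
    linear_combination c^2 * hsc
  have hΦ : (u + (c:ℂ))/(u*(1+(c:ℂ)*u)) = Complex.exp (Complex.I * (θf c ψ)) := by
    rw [exp_θf hc0 hc1 ψ, ← hu]
    rw [div_eq_div_iff (mul_ne_zero hu0 hden) hden]
    linear_combination (-(c:ℂ))*(1+(c:ℂ)*u)*hprod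
  have hNeval := Nq_eval (c := c) hdeg hu0 hden
  rw [hΦ] at hNeval
  -- now compute the norm
  set P : ℝ := ‖p.eval (Complex.exp (Complex.I * (θf c ψ)))‖ with hP
  set A : ℝ := ‖1 + (c:ℂ)*u‖ with hA
  have hApos : 0 < A := by
    rw [hA]
    exact norm_pos_iff.mpr hden
  have hnormN : ‖(Nq c n p).eval u‖ = A^n * P := by
    rw [hNeval, norm_mul, norm_pow, norm_mul,
      habs, one_mul, ← hA, ← hP]
  have hDpos := D_pos hc0 hc1 ψ
  have h1 : ‖Gf c n p u‖^2 = (A^n*P)^2 * (2*|Real.cos ψ + c|) / ((A^2)^(n+1)) := by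
    rw [Gf, norm_div, norm_mul, hnormN, div_pow, mul_pow, abs_cpow_half_sq, habsq,
      norm_pow, ← hA, ← pow_mul]
    ring_nf
  have h2 : (A^n*P)^2 = (1 + 2*c*Real.cos ψ + c^2)^n * P^2 := by
    rw [mul_pow, ← pow_mul, mul_comm n 2, pow_mul, habsden]
  have hDn : (0:ℝ) < (1 + 2*c*Real.cos ψ + c^2)^n := pow_pos hDpos n
  rw [h1, h2, habsden, pow_succ (1 + 2*c*Real.cos ψ + c^2) n]
  rw [show (1 + 2*c*Real.cos ψ + c^2)^n * P^2 * (2*|Real.cos ψ + c|)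
      = (1 + 2*c*Real.cos ψ + c^2)^n * (P^2 * (2*|Real.cos ψ + c|)) from by ring]
  rw [mul_div_mul_left _ _ hDn.ne', mul_div_assoc]

noncomputable def Fn (c : ℝ) (n : ℕ) (p : Polynomial ℂ) (ψ : ℝ) : ℝ :=
  ‖p.eval (Complex.exp (Complex.I * (θf c ψ)))‖^2 *
    (2*|Real.cos ψ + c| / (1 + 2*c*Real.cos ψ + c^2))

lemma θf_cont {c : ℝ} (hc0 : 0 < c) (hc1 : c < 1) : Continuous (θf c) := by
  unfold θf
  refine continuous_const.mul (Real.continuous_arctan.comp ?_)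
  exact (continuous_const.mul Real.continuous_sin).div
    (continuous_const.add (continuous_const.mul Real.continuous_cos))
    (fun ψ => (den1_pos hc0 hc1 ψ).ne')

lemma g_cont (p : Polynomial ℂ) :
    Continuous (fun θ : ℝ => ‖p.eval (Complex.exp (Complex.I * θ))‖^2) := by
  apply Continuous.pow
  apply Continuous.norm
  exact (Polynomial.continuous p).comp
    (Complex.continuous_exp.comp (continuous_const.mul Complex.continuous_ofReal))

lemma Fn_cont {c : ℝ} (hc0 : 0 < c) (hc1 : c < 1) (n : ℕ) (p : Polynomial ℂ) :
    Continuous (Fn c n p) := by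
  unfold Fn
  refine Continuous.mul ((g_cont p).comp (θf_cont hc0 hc1)) ?_
  refine Continuous.div ?_ ?_ (fun ψ => (D_pos hc0 hc1 ψ).ne') <;> fun_prop

lemma Fn_periodic (c : ℝ) (n : ℕ) (p : Polynomial ℂ) :
    Function.Periodic (Fn c n p) (2*π) := by
  intro x
  simp only [Fn, θf_periodic c x, Real.cos_add_two_pi]

lemma integral_Gf_eq_Fn {c : ℝ} (hc0 : 0 < c) (hc1 : c < 1) {n : ℕ} {p : Polynomial ℂ}
    (hdeg : p.natDegree = n) :
    ∫ φ in (0:ℝ)..(2*π), ‖Gf c n p (circleMap 0 1 φ)‖^2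
      = ∫ ψ in (0:ℝ)..(2*π), Fn c n p ψ := by
  have h1 : ∀ φ : ℝ, ‖Gf c n p (circleMap 0 1 φ)‖^2 = Fn c n p (-φ) := by
    intro φ
    have hc : circleMap 0 1 φ = Complex.exp (-(Complex.I * ((-φ : ℝ) : ℂ))) := by
      simp [circleMap]
      congr 1
      push_cast
      ring
    rw [hc, norm_Gf_boundary hc0 hc1 hdeg (-φ)]
    rfl
  simp only [h1]
  rw [intervalIntegral.integral_comp_neg (Fn c n p)]
  have := (Fn_periodic c n p).intervalIntegral_add_eq (-(2*π)) 0
  simpa using this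

lemma cov_piece {c : ℝ} (hc0 : 0 < c) (hc1 : c < 1) (p : Polynomial ℂ) (s t : ℝ) :
    ∫ ψ in s..t, (2*c*(Real.cos ψ + c)/(1 + 2*c*Real.cos ψ + c^2)) •
        ((fun θ : ℝ => ‖p.eval (Complex.exp (Complex.I * θ))‖^2) ∘ (θf c)) ψ
      = ∫ θ in (θf c s)..(θf c t), ‖p.eval (Complex.exp (Complex.I * θ))‖^2 := by
  apply intervalIntegral.integral_comp_smul_deriv
  · exact fun ψ _ => hasDerivAt_θf hc0 hc1 ψ
  · apply Continuous.continuousOn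
    refine Continuous.div ?_ ?_ (fun ψ => (D_pos hc0 hc1 ψ).ne') <;> fun_prop
  · exact g_cont p

lemma integral_Fn {c : ℝ} (hc0 : 0 < c) (hc1 : c < 1) (n : ℕ) (p : Polynomial ℂ) :
    ∫ ψ in (0:ℝ)..(2*π), Fn c n p ψ
      = (2/c) * ∫ θ in (-(2*Real.arcsin c))..(2*Real.arcsin c),
          ‖p.eval (Complex.exp (Complex.I * θ))‖^2 := by
  set g : ℝ → ℝ := fun θ : ℝ => ‖p.eval (Complex.exp (Complex.I * θ))‖^2 with hg
  set ψ₀ : ℝ := Real.arccos (-c) with hψ₀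
  set B : ℝ := 2*Real.arcsin c with hB
  have hψ₀0 : 0 ≤ ψ₀ := Real.arccos_nonneg _
  have hψ₀π : ψ₀ ≤ π := Real.arccos_le_pi _
  have hπ : 0 < π := Real.pi_pos
  have hψ₀2 : ψ₀ ≤ 2*π - ψ₀ := by linarith
  have hψ₀3 : 2*π - ψ₀ ≤ 2*π := by linarith
  have hInt : ∀ s t : ℝ, IntervalIntegrable (Fn c n p) MeasureTheory.volume s t :=
    fun s t => (Fn_cont hc0 hc1 n p).intervalIntegrable s t
  have hgInt : ∀ s t : ℝ, IntervalIntegrable g MeasureTheory.volume s t :=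
    fun s t => (g_cont p).intervalIntegrable s t
  -- θf values
  have hv0 : θf c 0 = 0 := θf_zero c
  have hv1 : θf c ψ₀ = B := θf_psi0 hc0 hc1
  have hv2 : θf c (2*π - ψ₀) = -B := by
    rw [show 2*π - ψ₀ = -ψ₀ + 2*π by ring, θf_periodic c (-ψ₀), θf_neg, hv1]
  have hv3 : θf c (2*π) = 0 := by
    have := θf_periodic c 0
    rw [zero_add] at this
    rw [this, hv0]
  -- piece 1
  have hA1 : ∫ ψ in (0:ℝ)..ψ₀, Fn c n p ψ = (1/c) * ∫ θ in (0:ℝ)..B, g θ := by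
    have e1 : Set.EqOn (Fn c n p)
        (fun ψ => (1/c) * ((2*c*(Real.cos ψ + c)/(1 + 2*c*Real.cos ψ + c^2)) •
          (g ∘ (θf c)) ψ)) (Set.uIcc 0 ψ₀) := by
      intro ψ hψ
      rw [Set.uIcc_of_le hψ₀0] at hψ
      have hnn : 0 ≤ Real.cos ψ + c := cos_add_c_nonneg hc0 hc1 hψ.1 hψ.2
      simp only [Fn, smul_eq_mul, Function.comp_apply, _root_.abs_of_nonneg hnn, hg]
      have hD := (D_pos hc0 hc1 ψ).ne'
      field_simp [hD]
    rw [intervalIntegral.integral_congr e1, intervalIntegral.integral_const_mul,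
      cov_piece hc0 hc1 p, hv0, hv1]
  -- piece 2
  have hA2 : ∫ ψ in ψ₀..(2*π - ψ₀), Fn c n p ψ = (1/c) * ∫ θ in (-B)..B, g θ := by
    have e2 : Set.EqOn (Fn c n p)
        (fun ψ => (-(1/c)) * ((2*c*(Real.cos ψ + c)/(1 + 2*c*Real.cos ψ + c^2)) •
          (g ∘ (θf c)) ψ)) (Set.uIcc ψ₀ (2*π - ψ₀)) := by
      intro ψ hψ
      rw [Set.uIcc_of_le hψ₀2] at hψ
      have hnp : Real.cos ψ + c ≤ 0 := cos_add_c_nonpos hc0 hc1 hψ.1 hψ.2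
      simp only [Fn, smul_eq_mul, Function.comp_apply, _root_.abs_of_nonpos hnp, hg]
      have hD := (D_pos hc0 hc1 ψ).ne'
      field_simp [hD]
    rw [intervalIntegral.integral_congr e2, intervalIntegral.integral_const_mul,
      cov_piece hc0 hc1 p, hv1, hv2, intervalIntegral.integral_symm]
    ring
  -- piece 3
  have hA3 : ∫ ψ in (2*π - ψ₀)..(2*π), Fn c n p ψ = (1/c) * ∫ θ in (-B)..(0:ℝ), g θ := by
    have e3 : Set.EqOn (Fn c n p)
        (fun ψ => (1/c) * ((2*c*(Real.cos ψ + c)/(1 + 2*c*Real.cos ψ + c^2)) •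
          (g ∘ (θf c)) ψ)) (Set.uIcc (2*π - ψ₀) (2*π)) := by
      intro ψ hψ
      rw [Set.uIcc_of_le hψ₀3] at hψ
      have hnn : 0 ≤ Real.cos ψ + c := by
        have h1 : Real.cos ψ = Real.cos (2*π - ψ) := (Real.cos_two_pi_sub ψ).symm
        rw [h1]
        exact cos_add_c_nonneg hc0 hc1 (by linarith [hψ.2]) (by linarith [hψ.1])
      simp only [Fn, smul_eq_mul, Function.comp_apply, _root_.abs_of_nonneg hnn, hg]
      have hD := (D_pos hc0 hc1 ψ).ne'
      field_simp [hD]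
    rw [intervalIntegral.integral_congr e3, intervalIntegral.integral_const_mul,
      cov_piece hc0 hc1 p, hv2, hv3]
  -- combine
  have hsplit2 := intervalIntegral.integral_add_adjacent_intervals
    (hInt ψ₀ (2*π - ψ₀)) (hInt (2*π - ψ₀) (2*π))
  have hsplit1 := intervalIntegral.integral_add_adjacent_intervals
    (hInt 0 ψ₀) (hInt ψ₀ (2*π))
  have hgadd := intervalIntegral.integral_add_adjacent_intervals
    (hgInt (-B) 0) (hgInt 0 B)
  have hcne : c ≠ 0 := hc0.ne'
  rw [← hsplit1, ← hsplit2, hA1, hA2, hA3]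
  field_simp
  linarith [hgadd]

lemma key {c : ℝ} (hc0 : 0 < c) (hc1 : c < 1) {n : ℕ} {p : Polynomial ℂ}
    (hmonic : p.Monic) (hdeg : p.natDegree = n) :
    π * (c^(2*n) * c) ≤ ∫ θ in (-(2*Real.arcsin c))..(2*Real.arcsin c),
      ‖p.eval (Complex.exp (Complex.I * θ))‖^2 := by
  set S : ℝ := ∫ θ in (-(2*Real.arcsin c))..(2*Real.arcsin c),
    ‖p.eval (Complex.exp (Complex.I * θ))‖^2 with hS
  have h1 := integral_norm_sq_ge hc0 hc1 hmonic hdeg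
  rw [integral_Gf_eq_Fn hc0 hc1 hdeg, integral_Fn hc0 hc1 n p, ← hS] at h1
  have h2 : (c^n)^2 = c^(2*n) := by rw [← pow_mul, mul_comm]
  rw [h2] at h1
  have h3 := mul_le_mul_of_nonneg_left h1 (by positivity : (0:ℝ) ≤ c/2)
  have h4 : (c/2) * ((2/c) * S) = S := by
    field_simp
  rw [h4] at h3
  linarith [h3]

end Stmt13Aux

open Stmt13Aux in
/-- Lower bound on k_n⁻²: every monic polynomial of degree n has squared norm at
least (c/(2y))·c^{2n} in L² of the arc of half-angle πy (normalized arclength),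
where c = sin(πy/2). -/
theorem stmt13 (y : ℝ) (hy0 : 0 < y) (hy1 : y < 1 / 2) (n : ℕ)
    (c : ℝ) (hc : c = Real.sin (π * y / 2))
    (p : Polynomial ℂ) (hmonic : p.Monic) (hdeg : p.natDegree = n) :
    (c / (2 * y)) * c ^ (2 * n) ≤
      (1 / (2 * π * y)) *
        ∫ θ in (-(π * y))..(π * y), ‖p.eval (Complex.exp (Complex.I * θ))‖ ^ 2 := by
  have hπ : 0 < π := Real.pi_pos
  have hπ4 : π < 3.15 := Real.pi_lt_d2
  have harg0 : 0 < π * y / 2 := by positivity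
  have harg1 : π * y / 2 < π / 4 := by nlinarith
  have hc0 : 0 < c := by
    rw [hc]
    exact Real.sin_pos_of_pos_of_lt_pi harg0 (by nlinarith)
  have hcle : c ≤ π * y / 2 := by
    rw [hc]
    exact Real.sin_le harg0.le
  have hc1 : c < 1 := by nlinarith
  have harcsin : Real.arcsin c = π * y / 2 := by
    rw [hc]
    exact Real.arcsin_sin (by nlinarith) (by nlinarith)
  have hkey := key hc0 hc1 hmonic hdeg
  rw [show 2 * Real.arcsin c = π * y by rw [harcsin]; ring] at hkey
  set S : ℝ := ∫ θ in (-(π * y))..(π * y), ‖p.eval (Complex.exp (Complex.I * θ))‖ ^ 2 with hS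
  have h5 : (1/(2*π*y)) * (π*(c^(2*n)*c)) = c/(2*y)*c^(2*n) := by
    field_simp
  have h6 := mul_le_mul_of_nonneg_left hkey (by positivity : (0:ℝ) ≤ 1/(2*π*y))
  rw [h5] at h6
  calc c/(2*y)*c^(2*n) ≤ (1/(2*π*y)) * S := h6
    _ = _ := by ring
end

section
/- With the same setup (arc Γ of half-angle πy, c = sin(πy/2), normalized arclength inner product), the leading coefficient k_n of the n-th orthonormal polynomial satisfies k_n⁻² ≤ 4(1+2y)² c^{2n}. -/
open Real Polynomial

namespace Stmt14

open Finset Polynomial.Chebyshev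

lemma T_deg_coeff : ∀ m : ℕ, (T ℝ (m:ℤ)).natDegree ≤ m ∧
    (T ℝ (m:ℤ)).coeff m = (if m = 0 then 1 else 2^(m-1)) := by
  have key : ∀ m : ℕ, ((T ℝ (m:ℤ)).natDegree ≤ m ∧
      (T ℝ (m:ℤ)).coeff m = (if m = 0 then 1 else 2^(m-1))) ∧
      ((T ℝ ((m:ℤ)+1)).natDegree ≤ m+1 ∧
      (T ℝ ((m:ℤ)+1)).coeff (m+1) = (if m+1 = 0 then 1 else 2^m)) := by
    intro m
    induction m with
    | zero =>
      constructor
      · simp [T_zero]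
      · push_cast
        simp [T_one]
    | succ m ih =>
      obtain ⟨h1, h2⟩ := ih
      refine ⟨by push_cast; exact h2, ?_, ?_⟩
      · have := T_add_two ℝ (m:ℤ)
        push_cast
        rw [show ((m:ℤ)+1+1) = (m:ℤ)+2 by ring, this]
        refine le_trans (natDegree_sub_le _ _) (max_le ?_ (le_trans h1.1 (by omega)))
        refine le_trans (natDegree_mul_le) ?_
        have : ((2:ℝ[X]) * X).natDegree ≤ 1 := by compute_degree
        omega
      · have := T_add_two ℝ (m:ℤ)
        push_cast
        rw [show ((m:ℤ)+1+1) = (m:ℤ)+2 by ring, this]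
        rw [coeff_sub, coeff_eq_zero_of_natDegree_lt (lt_of_le_of_lt h1.1 (by omega))]
        have h2X : (2:ℝ[X]) * X * T ℝ ((m:ℤ)+1) = Polynomial.C 2 * (X * T ℝ ((m:ℤ)+1)) := by
          rw [show (Polynomial.C (2:ℝ)) = (2:ℝ[X]) from by
            rw [show (2:ℝ) = ((2:ℕ):ℝ) by norm_num, Polynomial.C_eq_natCast]; norm_num]
          ring
        rw [h2X, coeff_C_mul, show m + 1 + 1 = (m+1) + 1 by ring, coeff_X_mul, h2.2]
        simp
        ring
  exact fun m => (key m).1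

noncomputable def Vr (m : ℕ) : ℝ[X] := 1 + 2 * ∑ k ∈ Finset.range m, T ℝ ((k:ℤ)+1)

lemma two_poly : (Polynomial.C (2:ℝ)) = (2:ℝ[X]) := by
  rw [show (2:ℝ) = ((2:ℕ):ℝ) by norm_num, Polynomial.C_eq_natCast]; norm_num

lemma T_deg' (k : ℕ) : (T ℝ ((k:ℤ)+1)).natDegree ≤ k + 1 := by
  have := (T_deg_coeff (k+1)).1
  push_cast at this
  exact this

lemma Vr_deg (m : ℕ) : (Vr m).natDegree ≤ m := by
  unfold Vr
  refine le_trans (natDegree_add_le _ _) (max_le (by simp) ?_)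
  rw [← two_poly]
  refine le_trans (natDegree_C_mul_le _ _) ?_
  refine natDegree_sum_le_of_forall_le _ _ (fun k hk => ?_)
  simp only [Finset.mem_range] at hk
  exact le_trans (T_deg' k) (by omega)

lemma Vr_coeff (m : ℕ) : (Vr m).coeff m = 2^m := by
  unfold Vr
  rw [coeff_add, ← two_poly, coeff_C_mul, finset_sum_coeff]
  rcases Nat.eq_zero_or_pos m with hm | hm
  · subst hm; simp
  · rw [Finset.sum_eq_single (m-1)]
    · have := (T_deg_coeff m).2
      rw [if_neg (by omega)] at this
      have hcast : ((m-1 : ℕ):ℤ) + 1 = (m:ℤ) := by omega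
      rw [hcast, this]
      have h1 : (1:ℝ[X]).coeff m = 0 := by
        rw [Polynomial.coeff_one]
        simp [Nat.pos_iff_ne_zero.mp hm]
      rw [h1]
      rw [show 2 * 2^(m-1) = (2:ℝ)^(m-1+1) by ring]
      rw [show m - 1 + 1 = m by omega]
      ring
    · intro k hk hne
      simp only [Finset.mem_range] at hk
      refine coeff_eq_zero_of_natDegree_lt (lt_of_le_of_lt (T_deg' k) (by omega))
    · intro h
      exact absurd (Finset.mem_range.mpr (by omega)) h

lemma Vr_eval_cos (m : ℕ) (φ : ℝ) :
    Real.sin (φ/2) * (Vr m).eval (Real.cos φ) = Real.sin ((2*m+1) * (φ/2)) := by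
  unfold Vr
  rw [eval_add, eval_mul, eval_finset_sum]
  simp only [eval_one, eval_ofNat]
  have hT : ∀ k : ℕ, (T ℝ ((k:ℤ)+1)).eval (Real.cos φ) = Real.cos ((k+1) * φ) := by
    intro k
    rw [T_real_cos]
    push_cast
    ring_nf
  simp only [hT]
  induction m with
  | zero => simp
  | succ m ih =>
    rw [Finset.sum_range_succ]
    have expand : Real.sin (φ/2) * (1 + 2 * (∑ k ∈ Finset.range m, Real.cos ((k+1)*φ) + Real.cos ((m+1)*φ)))
        = Real.sin (φ/2) * (1 + 2 * ∑ k ∈ Finset.range m, Real.cos ((k+1)*φ))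
          + 2 * Real.sin (φ/2) * Real.cos ((m+1)*φ) := by ring
    push_cast
    push_cast at ih
    rw [expand, ih]
    have h1 : Real.sin ((m+1)*φ + φ/2) = Real.sin ((m+1)*φ) * Real.cos (φ/2) + Real.cos ((m+1)*φ) * Real.sin (φ/2) := Real.sin_add _ _
    have h2 : Real.sin ((m+1)*φ - φ/2) = Real.sin ((m+1)*φ) * Real.cos (φ/2) - Real.cos ((m+1)*φ) * Real.sin (φ/2) := Real.sin_sub _ _
    have h3 : (2*(m+1)+1) * (φ/2) = (m+1)*φ + φ/2 := by ring
    have h4 : (2*(m:ℝ)+1) * (φ/2) = (m+1)*φ - φ/2 := by ring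
    rw [h3, h4, h1, h2]
    ring

noncomputable def Aq (c : ℝ) : ℂ[X] := X^2 + Polynomial.C (2*(c:ℂ)^2 - 2) * X + 1

noncomputable def pc (P : ℝ[X]) (c : ℝ) (m : ℕ) : ℂ[X] :=
  ∑ j ∈ Finset.range (m+1),
    Polynomial.C ((P.coeff j : ℂ) * ((2*(c:ℂ)^2)⁻¹)^j) * (Aq c)^j * X^(m-j)

lemma Aq_monic (c : ℝ) : (Aq c).Monic := by unfold Aq; monicity!

lemma Aq_deg (c : ℝ) : (Aq c).natDegree = 2 := by unfold Aq; compute_degree!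

lemma pc_deg (P : ℝ[X]) (c : ℝ) (m : ℕ) : (pc P c m).natDegree ≤ 2*m := by
  refine natDegree_sum_le_of_forall_le _ _ (fun j hj => ?_)
  simp only [Finset.mem_range] at hj
  refine le_trans (natDegree_mul_le) ?_
  have h1 : (Polynomial.C ((P.coeff j : ℂ) * ((2*(c:ℂ)^2)⁻¹)^j) * (Aq c)^j).natDegree ≤ 2*j := by
    refine le_trans (natDegree_C_mul_le _ _) ?_
    rw [natDegree_pow, Aq_deg]; omega
  have h2 : (X^(m-j) : ℂ[X]).natDegree ≤ m - j := by simp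
  omega

lemma pc_coeff (P : ℝ[X]) (c : ℝ) (m : ℕ) :
    (pc P c m).coeff (2*m) = (P.coeff m : ℂ) * ((2*(c:ℂ)^2)⁻¹)^m := by
  unfold pc
  rw [finset_sum_coeff, Finset.sum_eq_single m]
  · have hpow : ((Aq c)^m).Monic := (Aq_monic c).pow m
    have hdeg : ((Aq c)^m).natDegree = 2*m := by simp [natDegree_pow, Aq_deg]; ring
    have : ((Aq c)^m).coeff (2*m) = 1 := by
      have := hpow.coeff_natDegree
      rwa [hdeg] at this
    rw [Nat.sub_self, pow_zero, mul_one, coeff_C_mul, this, mul_one]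
  · intro j hj hne
    simp only [Finset.mem_range] at hj
    refine coeff_eq_zero_of_natDegree_lt ?_
    have h1 : (Polynomial.C ((P.coeff j : ℂ) * ((2*(c:ℂ)^2)⁻¹)^j) * (Aq c)^j * X^(m-j)).natDegree ≤ m + j := by
      refine le_trans (natDegree_mul_le) ?_
      have h2 : (Polynomial.C ((P.coeff j : ℂ) * ((2*(c:ℂ)^2)⁻¹)^j) * (Aq c)^j).natDegree ≤ 2*j := by
        refine le_trans (natDegree_C_mul_le _ _) ?_
        rw [natDegree_pow, Aq_deg]; omega
      have h3 : (X^(m-j) : ℂ[X]).natDegree ≤ m - j := by simp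
      omega
    omega
  · intro h
    exact absurd (Finset.mem_range.mpr (by omega)) h

lemma pc_eval (P : ℝ[X]) (c : ℝ) (m : ℕ) (hP : P.natDegree ≤ m)
    (z : ℂ) (hz : z ≠ 0) (hc : (c:ℂ) ≠ 0) :
    (pc P c m).eval z
      = z^m * Polynomial.eval ((Aq c).eval z / (2*(c:ℂ)^2 * z)) (P.map (algebraMap ℝ ℂ)) := by
  unfold pc
  rw [eval_finset_sum]
  have hmap0 : (P.map (algebraMap ℝ ℂ)).natDegree ≤ m := le_trans natDegree_map_le hP
  have hmap : (P.map (algebraMap ℝ ℂ)).natDegree < m + 1 := by omega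
  rw [eval_eq_sum_range' hmap]
  rw [Finset.mul_sum]
  refine Finset.sum_congr rfl (fun j hj => ?_)
  simp only [Finset.mem_range] at hj
  have hj' : j ≤ m := by omega
  simp only [eval_mul, eval_C, eval_pow, eval_X, coeff_map]
  have hzj : z^j ≠ 0 := pow_ne_zero _ hz
  have hc2 : (2*(c:ℂ)^2) ≠ 0 := by
    simp [hc]
  have hzm : z^m = z^(m-j) * z^j := by
    rw [← pow_add]
    congr 1
    omega
  rw [div_pow, mul_pow]
  field_simp
  rw [hzm]
  simp only [Complex.coe_algebraMap]
  field_simp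
  have e1 : (c:ℂ)^(j*2) * (c:ℂ)⁻¹^(j*2) = 1 := by rw [← mul_pow, mul_inv_cancel₀ hc, one_pow]
  have e2 : (1/2:ℂ)^j * 2^j = 1 := by rw [← mul_pow]; norm_num
  linear_combination ((P.coeff j : ℂ) * (Aq c).eval z ^ j * (c:ℂ)^(j*2) * (c:ℂ)⁻¹^(j*2)) * e2
    + ((P.coeff j : ℂ) * (Aq c).eval z ^ j) * e1

lemma exp_quad (θ : ℝ) :
    (Complex.exp (Complex.I * θ))^2 + 1 = 2 * Complex.cos (θ:ℂ) * Complex.exp (Complex.I * θ) := by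
  rw [mul_comm Complex.I, Complex.exp_mul_I]
  linear_combination (Complex.sin (θ:ℂ))^2 * Complex.I_sq - Complex.sin_sq_add_cos_sq (θ:ℂ)

lemma Aq_eval_exp (c θ : ℝ) (hc : c ≠ 0) :
    (Aq c).eval (Complex.exp (Complex.I * θ))
      = 2*(c:ℂ)^2 * Complex.exp (Complex.I * θ) * ((1 + (Real.cos θ - 1)/c^2 : ℝ) : ℂ) := by
  unfold Aq
  simp only [eval_add, eval_mul, eval_pow, eval_X, eval_C, eval_one]
  have hcc : (c:ℂ) ≠ 0 := Complex.ofReal_ne_zero.mpr hc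
  push_cast
  field_simp
  linear_combination exp_quad θ

lemma norm_exp_I (θ : ℝ) : ‖Complex.exp (Complex.I * θ)‖ = 1 := by
  rw [mul_comm, Complex.norm_exp_ofReal_mul_I]

lemma norm_exp_sub_one_sq (θ : ℝ) :
    ‖Complex.exp (Complex.I * θ) - 1‖^2 = 2 - 2 * Real.cos θ := by
  rw [mul_comm Complex.I, Complex.exp_mul_I, ← Complex.ofReal_cos, ← Complex.ofReal_sin,
    Complex.sq_norm, Complex.normSq_apply]
  simp only [Complex.sub_re, Complex.sub_im, Complex.add_re, Complex.add_im, Complex.mul_re,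
    Complex.mul_im, Complex.I_re, Complex.I_im, Complex.ofReal_re, Complex.ofReal_im,
    Complex.one_re, Complex.one_im]
  nlinarith [Real.sin_sq_add_cos_sq θ]

lemma one_sub_cos (θ : ℝ) : 1 - Real.cos θ = 2 * Real.sin (θ/2)^2 := by
  have := Real.sin_sq_eq_half_sub (θ/2)
  rw [show 2*(θ/2) = θ by ring] at this
  linarith

lemma map_eval_real (P : ℝ[X]) (w : ℝ) :
    (P.map (algebraMap ℝ ℂ)).eval ((w:ℝ):ℂ) = ((P.eval w : ℝ) : ℂ) := by
  rw [Polynomial.eval_map]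
  exact Polynomial.eval₂_at_apply (algebraMap ℝ ℂ) w

noncomputable def pEven (c : ℝ) (m : ℕ) : ℂ[X] :=
  Polynomial.C (2*(c:ℂ)^(2*m)) * pc (T ℝ (m:ℤ)) c m

noncomputable def pOdd (c : ℝ) (m : ℕ) : ℂ[X] :=
  Polynomial.C ((c:ℂ)^(2*m)) * ((X - 1) * pc (Vr m) c m)

lemma two_pow_succ (m : ℕ) (hm : 1 ≤ m) : (2:ℂ)^m = 2 * 2^(m-1) := by
  conv_lhs => rw [show m = (m-1)+1 by omega]
  rw [pow_succ]
  ring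

lemma pEven_coeff (c : ℝ) (m : ℕ) (hm : 1 ≤ m) (hc : c ≠ 0) :
    (pEven c m).coeff (2*m) = 1 := by
  unfold pEven
  rw [coeff_C_mul, pc_coeff]
  have hT := (T_deg_coeff m).2
  rw [if_neg (by omega)] at hT
  rw [hT]
  have hcc : (c:ℂ) ≠ 0 := Complex.ofReal_ne_zero.mpr hc
  have h2c : (2*(c:ℂ)^2) ≠ 0 := by simp [hcc]
  rw [inv_pow]
  push_cast
  rw [mul_pow, ← pow_mul]
  field_simp
  rw [two_pow_succ m hm]

lemma pOdd_coeff (c : ℝ) (m : ℕ) (hc : c ≠ 0) :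
    (pOdd c m).coeff (2*m+1) = 1 := by
  unfold pOdd
  rw [coeff_C_mul]
  have hq : ((X - 1) * pc (Vr m) c m).coeff (2*m+1)
      = (pc (Vr m) c m).coeff (2*m) - (pc (Vr m) c m).coeff (2*m+1) := by
    rw [sub_mul, one_mul, coeff_sub, coeff_X_mul]
  rw [hq, pc_coeff, Vr_coeff,
    coeff_eq_zero_of_natDegree_lt (lt_of_le_of_lt (pc_deg (Vr m) c m) (Nat.lt_succ_of_le (le_refl (2*m)))),
    sub_zero]
  have hcc : (c:ℂ) ≠ 0 := Complex.ofReal_ne_zero.mpr hc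
  have h2c : (2*(c:ℂ)^2) ≠ 0 := by simp [hcc]
  rw [inv_pow]
  push_cast
  rw [mul_pow, ← pow_mul]
  field_simp

lemma pEven_deg (c : ℝ) (m : ℕ) : (pEven c m).natDegree ≤ 2*m :=
  le_trans (natDegree_C_mul_le _ _) (pc_deg _ _ _)

lemma pOdd_deg (c : ℝ) (m : ℕ) : (pOdd c m).natDegree ≤ 2*m+1 := by
  refine le_trans (natDegree_C_mul_le _ _) (le_trans natDegree_mul_le ?_)
  have h1 : (X - 1 : ℂ[X]).natDegree ≤ 1 := by compute_degree
  have h2 := pc_deg (Vr m) c m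
  omega

lemma pEven_bound (c θ : ℝ) (hc : 0 < c) (m : ℕ)
    (hw : -1 ≤ 1 + (Real.cos θ - 1)/c^2) :
    ‖(pEven c m).eval (Complex.exp (Complex.I * θ))‖^2 ≤ 4 * c^(2*(2*m)) := by
  set z := Complex.exp (Complex.I * θ) with hzdef
  set w : ℝ := 1 + (Real.cos θ - 1)/c^2 with hwdef
  have hq0 : (Real.cos θ - 1)/c^2 ≤ 0 :=
    div_nonpos_of_nonpos_of_nonneg (by nlinarith [Real.cos_le_one θ]) (by positivity)
  have hw1 : w ≤ 1 := by rw [hwdef]; linarith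
  have hcc : (c:ℂ) ≠ 0 := Complex.ofReal_ne_zero.mpr hc.ne'
  have hz : z ≠ 0 := Complex.exp_ne_zero _
  have h2cz : 2*(c:ℂ)^2 * z ≠ 0 := by
    apply mul_ne_zero _ hz
    simp [hcc]
  have hTw : (T ℝ (m:ℤ)).eval w = Real.cos (m * Real.arccos w) := by
    conv_lhs => rw [show w = Real.cos (Real.arccos w) from (Real.cos_arccos hw hw1).symm]
    rw [T_real_cos]
    norm_num
  have heval : ‖(pEven c m).eval z‖ = 2*c^(2*m) * |Real.cos (m * Real.arccos w)| := by
    unfold pEven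
    rw [eval_mul, eval_C, pc_eval _ _ _ (T_deg_coeff m).1 z hz hcc,
      Aq_eval_exp c θ hc.ne', ← hzdef, ← hwdef, mul_div_cancel_left₀ _ h2cz, map_eval_real, hTw]
    simp only [norm_mul, norm_pow, Complex.norm_real, Real.norm_eq_abs]
    rw [hzdef, norm_exp_I, one_pow, abs_of_pos hc]
    have h2n : ‖(2:ℂ)‖ = 2 := by simp
    rw [h2n]
    ring
  rw [heval]
  have habs : |Real.cos (m * Real.arccos w)| ≤ 1 := Real.abs_cos_le_one _
  have habs0 : (0:ℝ) ≤ |Real.cos (m * Real.arccos w)| := abs_nonneg _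
  have hcos2 : |Real.cos (m * Real.arccos w)|^2 ≤ 1 := by nlinarith
  have hexp : c^(2*(2*m)) = (c^(2*m))^2 := by rw [← pow_mul]; ring_nf
  rw [hexp]
  calc (2*c^(2*m) * |Real.cos (m * Real.arccos w)|)^2
      = 4*(c^(2*m))^2 * |Real.cos (m * Real.arccos w)|^2 := by ring
    _ ≤ 4*(c^(2*m))^2 * 1 := by
        apply mul_le_mul_of_nonneg_left hcos2 (by positivity)
    _ = 4*(c^(2*m))^2 := by ring

lemma pOdd_bound (c θ : ℝ) (hc : 0 < c) (m : ℕ)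
    (hw : -1 ≤ 1 + (Real.cos θ - 1)/c^2) :
    ‖(pOdd c m).eval (Complex.exp (Complex.I * θ))‖^2 ≤ 4 * c^(2*(2*m+1)) := by
  set z := Complex.exp (Complex.I * θ) with hzdef
  set w : ℝ := 1 + (Real.cos θ - 1)/c^2 with hwdef
  have hc2 : (0:ℝ) < c^2 := by positivity
  have hq0 : (Real.cos θ - 1)/c^2 ≤ 0 :=
    div_nonpos_of_nonpos_of_nonneg (by nlinarith [Real.cos_le_one θ]) (by positivity)
  have hw1 : w ≤ 1 := by rw [hwdef]; linarith
  have hcc : (c:ℂ) ≠ 0 := Complex.ofReal_ne_zero.mpr hc.ne'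
  have hz : z ≠ 0 := Complex.exp_ne_zero _
  have h2cz : 2*(c:ℂ)^2 * z ≠ 0 := by
    apply mul_ne_zero _ hz
    simp [hcc]
  have heval : ‖(pOdd c m).eval z‖ = c^(2*m) * (‖z - 1‖ * |(Vr m).eval w|) := by
    unfold pOdd
    rw [eval_mul, eval_C, eval_mul, eval_sub, eval_X, eval_one,
      pc_eval _ _ _ (Vr_deg m) z hz hcc,
      Aq_eval_exp c θ hc.ne', ← hzdef, ← hwdef, mul_div_cancel_left₀ _ h2cz, map_eval_real]
    simp only [norm_mul, norm_pow, Complex.norm_real, Real.norm_eq_abs]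
    rw [hzdef, norm_exp_I, one_pow, abs_of_pos hc]
    ring
  rw [heval]
  set φ := Real.arccos w with hφdef
  have hcosφ : Real.cos φ = w := Real.cos_arccos hw hw1
  have hV : Real.sin (φ/2) * (Vr m).eval w = Real.sin ((2*m+1) * (φ/2)) := by
    conv_lhs => rw [show w = Real.cos φ from hcosφ.symm]
    exact Vr_eval_cos m φ
  have h1w : 1 - w = 2 * Real.sin (φ/2)^2 := by
    rw [← hcosφ, one_sub_cos]
  have hkey : (2 - 2*Real.cos θ) * ((Vr m).eval w)^2 ≤ 4 * c^2 := by
    have hcw : 2 - 2*Real.cos θ = 2*c^2*(1-w) := by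
      rw [hwdef]
      field_simp
      ring
    rw [hcw, h1w]
    have hs : (Real.sin (φ/2) * (Vr m).eval w)^2 ≤ 1 := by
      rw [hV]
      nlinarith [Real.neg_one_le_sin ((2*m+1) * (φ/2)), Real.sin_le_one ((2*m+1) * (φ/2))]
    nlinarith [hs, hc2]
  have hzn : ‖z - 1‖^2 = 2 - 2*Real.cos θ := norm_exp_sub_one_sq θ
  have expand : (c^(2*m) * (‖z - 1‖ * |(Vr m).eval w|))^2
      = (c^(2*m))^2 * (‖z - 1‖^2 * ((Vr m).eval w)^2) := by
    rw [mul_pow, mul_pow, sq_abs]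
  rw [expand, hzn]
  have hfin : (c^(2*m))^2 * ((2 - 2*Real.cos θ) * ((Vr m).eval w)^2)
      ≤ (c^(2*m))^2 * (4*c^2) := by
    apply mul_le_mul_of_nonneg_left hkey (by positivity)
  calc (c^(2*m))^2 * ((2 - 2*Real.cos θ) * ((Vr m).eval w)^2)
      ≤ (c^(2*m))^2 * (4*c^2) := hfin
    _ = 4 * c^(2*(2*m+1)) := by rw [← pow_mul]; ring

end Stmt14

open Stmt14 in
/-- Upper bound on k_n⁻²: there is a monic polynomial of degree n whose squared
norm in L² of the arc of half-angle πy (normalized arclength) is at most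
4(1+2y)²·c^{2n}, where c = sin(πy/2). -/
theorem stmt14 (y : ℝ) (hy0 : 0 < y) (hy1 : y < 1 / 2) (n : ℕ)
    (c : ℝ) (hc : c = Real.sin (π * y / 2)) :
    ∃ p : Polynomial ℂ, p.Monic ∧ p.natDegree = n ∧
      (1 / (2 * π * y)) *
          (∫ θ in (-(π * y))..(π * y), ‖p.eval (Complex.exp (Complex.I * θ))‖ ^ 2)
        ≤ 4 * (1 + 2 * y) ^ 2 * c ^ (2 * n) := by
  have hπ : (0:ℝ) < π := Real.pi_pos
  have hπy : 0 < π * y := by positivity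
  have harg1 : 0 < π * y / 2 := by positivity
  have harg2 : π * y / 2 < π / 2 := by nlinarith
  have hc0 : 0 < c := by
    rw [hc]
    exact Real.sin_pos_of_pos_of_lt_pi harg1 (by nlinarith)
  -- pointwise w bound
  have hwge : ∀ θ ∈ Set.Icc (-(π*y)) (π*y), -1 ≤ 1 + (Real.cos θ - 1)/c^2 := by
    intro θ hθ
    obtain ⟨hθ1, hθ2⟩ := hθ
    have hhalf : θ/2 ∈ Set.Icc (-(π/2)) (π/2) := by
      constructor <;> [nlinarith; nlinarith]
    have hmem2 : π*y/2 ∈ Set.Icc (-(π/2)) (π/2) := by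
      constructor <;> nlinarith
    have hmem3 : -(π*y/2) ∈ Set.Icc (-(π/2)) (π/2) := by
      constructor <;> nlinarith
    have hs1 : Real.sin (θ/2) ≤ Real.sin (π*y/2) :=
      Real.strictMonoOn_sin.monotoneOn hhalf hmem2 (by nlinarith)
    have hs2 : Real.sin (-(π*y/2)) ≤ Real.sin (θ/2) :=
      Real.strictMonoOn_sin.monotoneOn hmem3 hhalf (by nlinarith)
    rw [Real.sin_neg] at hs2
    have hsq : Real.sin (θ/2)^2 ≤ c^2 := by
      rw [hc]
      exact sq_le_sq' hs2 hs1
    have h1c : 1 - Real.cos θ ≤ 2*c^2 := by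
      rw [one_sub_cos]
      nlinarith
    have hc2 : (0:ℝ) < c^2 := by positivity
    have hdiv : -2 ≤ (Real.cos θ - 1)/c^2 := by
      rw [le_div_iff₀ hc2]
      nlinarith
    linarith
  -- continuity of integrand for any polynomial
  have hcont : ∀ p : Polynomial ℂ, Continuous fun θ:ℝ => ‖p.eval (Complex.exp (Complex.I * θ))‖^2 := by
    intro p
    have h1 : Continuous fun θ:ℝ => Complex.exp (Complex.I * θ) :=
      Complex.continuous_exp.comp (continuous_const.mul Complex.continuous_ofReal)
    exact ((p.continuous.comp h1).norm).pow 2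
  -- generic wrap-up given pointwise bound
  have wrap : ∀ p : Polynomial ℂ,
      (∀ θ ∈ Set.Icc (-(π*y)) (π*y), ‖p.eval (Complex.exp (Complex.I * θ))‖^2 ≤ 4*c^(2*n)) →
      (1 / (2 * π * y)) *
          (∫ θ in (-(π * y))..(π * y), ‖p.eval (Complex.exp (Complex.I * θ))‖ ^ 2)
        ≤ 4 * (1 + 2 * y) ^ 2 * c ^ (2 * n) := by
    intro p hbd
    have hab : -(π*y) ≤ π*y := by linarith
    have hint : (∫ θ in (-(π * y))..(π * y), ‖p.eval (Complex.exp (Complex.I * θ))‖ ^ 2)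
        ≤ (∫ _ in (-(π * y))..(π * y), 4*c^(2*n)) := by
      apply intervalIntegral.integral_mono_on hab
        ((hcont p).intervalIntegrable _ _)
        (intervalIntegrable_const)
      exact hbd
    rw [intervalIntegral.integral_const, smul_eq_mul] at hint
    have hInonneg : (0:ℝ) ≤ (∫ θ in (-(π * y))..(π * y), ‖p.eval (Complex.exp (Complex.I * θ))‖ ^ 2) := by
      apply intervalIntegral.integral_nonneg hab
      intro θ _
      positivity
    have hconst : (π*y - -(π*y)) * (4*c^(2*n)) = 2*π*y * (4*c^(2*n)) := by ring
    rw [hconst] at hint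
    have h2πy : (0:ℝ) < 2*π*y := by positivity
    have hmean : (1 / (2 * π * y)) *
        (∫ θ in (-(π * y))..(π * y), ‖p.eval (Complex.exp (Complex.I * θ))‖ ^ 2) ≤ 4*c^(2*n) := by
      rw [div_mul_eq_mul_div, one_mul, div_le_iff₀ h2πy]
      calc (∫ θ in (-(π * y))..(π * y), ‖p.eval (Complex.exp (Complex.I * θ))‖ ^ 2)
          ≤ 2*π*y * (4*c^(2*n)) := hint
        _ = 4*c^(2*n) * (2*π*y) := by ring
    have hRHS : 4*c^(2*n) ≤ 4 * (1 + 2 * y) ^ 2 * c ^ (2 * n) := by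
      have hcp : (0:ℝ) < c^(2*n) := by positivity
      nlinarith
    linarith
  have monic_deg_of : ∀ (p : Polynomial ℂ), p.natDegree ≤ n → p.coeff n = 1 →
      p.Monic ∧ p.natDegree = n := by
    intro p h1 h2
    have hm := Polynomial.monic_of_natDegree_le_of_coeff_eq_one n h1 h2
    have hge : n ≤ p.natDegree := Polynomial.le_natDegree_of_ne_zero (by rw [h2]; exact one_ne_zero)
    exact ⟨hm, le_antisymm h1 hge⟩
  rcases Nat.eq_zero_or_pos n with hn | hn
  · subst hn
    refine ⟨1, monic_one, natDegree_one, ?_⟩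
    apply wrap
    intro θ _
    rw [eval_one]
    simp
  · rcases Nat.even_or_odd n with ⟨m, hm⟩ | ⟨m, hm⟩
    · have hn2 : n = 2*m := by omega
      have hm1 : 1 ≤ m := by omega
      obtain ⟨hmon, hdeg⟩ := monic_deg_of (pEven c m)
        (by rw [hn2]; exact pEven_deg c m)
        (by rw [hn2]; exact pEven_coeff c m hm1 hc0.ne')
      refine ⟨pEven c m, hmon, hdeg, wrap _ ?_⟩
      intro θ hθ
      rw [hn2]
      exact pEven_bound c θ hc0 m (hwge θ hθ)
    · have hn2 : n = 2*m+1 := hm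
      obtain ⟨hmon, hdeg⟩ := monic_deg_of (pOdd c m)
        (by rw [hn2]; exact pOdd_deg c m)
        (by rw [hn2]; exact pOdd_coeff c m hc0.ne')
      refine ⟨pOdd c m, hmon, hdeg, wrap _ ?_⟩
      intro θ hθ
      rw [hn2]
      exact pOdd_bound c θ hc0 m (hwge θ hθ)
end

section
/- For real a ≥ b > 0 with appropriate size condition (valid whenever a + b cos θ > 0 on [−π, π)), the inequality a + b cos θ ≤ (a + b)·exp(−θ²/(2(a/b + 1))) holds for all θ ∈ [−π, π), provided b/a is not too large (specifically valid when a = 2−c², b = 2√(1−c²) and 0 < c < 0.85). -/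
set_option maxHeartbeats 1000000


open Real

lemma exp_neg_ge_p5 {u : ℝ} (hu : 0 ≤ u) :
    1 - u + u^2/2 - u^3/6 + u^4/24 - u^5/120 ≤ Real.exp (-u) := by
  have hd : ∀ v : ℝ, HasDerivAt
      (fun v : ℝ => (1 - v + v^2/2 - v^3/6 + v^4/24 - v^5/120) * Real.exp v)
      (-(v^5/120 * Real.exp v)) v := by
    intro v
    have h1 : HasDerivAt (fun v : ℝ => 1 - v + v^2/2 - v^3/6 + v^4/24 - v^5/120)
        (-1 + v - v^2/2 + v^3/6 - v^4/24) v := by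
      have h := (((((hasDerivAt_const v (1:ℝ)).sub (hasDerivAt_id v)).add
        ((hasDerivAt_pow 2 v).div_const 2)).sub
        ((hasDerivAt_pow 3 v).div_const 6)).add
        ((hasDerivAt_pow 4 v).div_const 24)).sub
        ((hasDerivAt_pow 5 v).div_const 120)
      refine h.congr_deriv ?_
      push_cast
      ring
    have h2 := h1.mul (Real.hasDerivAt_exp v)
    refine h2.congr_deriv ?_
    ring
  have anti : AntitoneOn
      (fun v : ℝ => (1 - v + v^2/2 - v^3/6 + v^4/24 - v^5/120) * Real.exp v)
      (Set.Ici 0) := by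
    apply antitoneOn_of_deriv_nonpos (convex_Ici 0)
    · exact Continuous.continuousOn (by continuity)
    · intro v _
      exact (hd v).differentiableAt.differentiableWithinAt
    · intro v hv
      rw [(hd v).deriv]
      rw [interior_Ici] at hv
      have hv0 : (0:ℝ) ≤ v := le_of_lt hv
      have : 0 ≤ v^5/120 * Real.exp v := by positivity
      linarith
  have key : (1 - u + u^2/2 - u^3/6 + u^4/24 - u^5/120) * Real.exp u ≤ 1 := by
    have h0 := anti (Set.self_mem_Ici) (Set.mem_Ici.mpr hu) hu
    simpa using h0
  have hE := Real.exp_pos u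
  rw [Real.exp_neg, inv_eq_one_div, le_div_iff₀ hE]
  exact key

lemma sin_lb {y : ℝ} (hy : 0 ≤ y) : y - y^3/6 ≤ Real.sin y := by
  have hd : ∀ v : ℝ, HasDerivAt (fun v : ℝ => Real.sin v - v + v^3/6)
      (Real.cos v - 1 + v^2/2) v := by
    intro v
    have h := ((Real.hasDerivAt_sin v).sub (hasDerivAt_id v)).add
      ((hasDerivAt_pow 3 v).div_const 6)
    refine h.congr_deriv ?_
    push_cast
    ring
  have mono : Monotone (fun v : ℝ => Real.sin v - v + v^3/6) := by
    apply monotone_of_deriv_nonneg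
    · intro v
      exact (hd v).differentiableAt
    · intro v
      rw [(hd v).deriv]
      have := Real.one_sub_sq_div_two_le_cos (x := v)
      linarith
  have h0 := mono hy
  simp at h0
  linarith

lemma cos_ub {θ : ℝ} (h0 : 0 ≤ θ) (hπ : θ ≤ π) :
    Real.cos θ ≤ 1 - θ^2/2 + θ^4/24 - θ^6/1152 := by
  have hy0 : (0:ℝ) ≤ θ/2 := by linarith
  have h4 : θ ≤ 4 := le_trans hπ Real.pi_le_four
  have hs := sin_lb hy0
  have hA : 0 ≤ θ/2 - (θ/2)^3/6 := by
    nlinarith [mul_nonneg hy0 hy0, mul_nonneg (mul_nonneg hy0 hy0) hy0]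
  have hid : Real.cos θ = 1 - 2*Real.sin (θ/2)^2 := by
    have h := Real.cos_two_mul' (θ/2)
    have h2 := Real.sin_sq_add_cos_sq (θ/2)
    rw [show 2*(θ/2) = θ by ring] at h
    linarith
  nlinarith [hs, hA, hid, sq_nonneg (Real.sin (θ/2) - (θ/2 - (θ/2)^3/6))]

lemma qA {t x : ℝ} (ht0 : 0.45 ≤ t) (ht1 : t ≤ 1/2) (hx0 : 0 ≤ x) (hx1 : x ≤ 5.76) :
    0 ≤ t/8 - t^2*x/48 + t^3*x^2/384 - t^4*x^3/3840 - 1/24 + x/1152 := by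
  have hq45 : 0 ≤ (0.45:ℝ)/8 - 0.45^2*x/48 + 0.45^3*x^2/384 - 0.45^4*x^3/3840 - 1/24 + x/1152 := by
    nlinarith [mul_nonneg (sub_nonneg.mpr hx1) (sq_nonneg (x - 1852/225)),
      sub_nonneg.mpr hx1, hx0]
  have hS : 0 ≤ 1/8 - (t+0.45)*x/48 + (t^2+0.45*t+0.2025)*x^2/384
      - (t^3+0.45*t^2+0.2025*t+0.091125)*x^3/3840 := by
    nlinarith [mul_nonneg (sub_nonneg.mpr ht0) (sub_nonneg.mpr hx1),
      mul_nonneg hx0 (sub_nonneg.mpr hx1),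
      mul_nonneg (mul_nonneg hx0 hx0) (sub_nonneg.mpr hx1),
      mul_nonneg (mul_nonneg (sub_nonneg.mpr ht0) hx0) (sub_nonneg.mpr hx1),
      mul_nonneg (mul_nonneg (sub_nonneg.mpr ht0) (sub_nonneg.mpr ht1)) hx0,
      sq_nonneg (x-3), mul_nonneg (sub_nonneg.mpr ht0) (sub_nonneg.mpr ht1),
      mul_nonneg (mul_nonneg (sub_nonneg.mpr ht0) (sub_nonneg.mpr ht0)) hx0,
      sub_nonneg.mpr ht1, sub_nonneg.mpr ht0, hx0, sub_nonneg.mpr hx1]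
  nlinarith [hq45, mul_nonneg (sub_nonneg.mpr ht0) hS]

lemma polyB {t d : ℝ} (ht0 : 0.45 ≤ t) (ht1 : t ≤ 1/2) (hd0 : 0 ≤ d) (hd1 : d ≤ 0.75) :
    1 - 2*t + t*d^2/2 ≤ 0.106*(1 - 4.93481*(t-0.45))*(1 + 2.76*t*d + (2.76*t*d)^2/2) := by
  nlinarith [mul_nonneg (sub_nonneg.mpr ht0) (sub_nonneg.mpr ht1),
    mul_nonneg hd0 (sub_nonneg.mpr hd1),
    mul_nonneg (sub_nonneg.mpr ht0) hd0,
    mul_nonneg (sub_nonneg.mpr ht1) hd0,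
    mul_nonneg (mul_nonneg hd0 hd0) (sub_nonneg.mpr hd1),
    mul_nonneg (mul_nonneg (sub_nonneg.mpr ht0) hd0) (sub_nonneg.mpr hd1),
    mul_nonneg (mul_nonneg (sub_nonneg.mpr ht1) hd0) (sub_nonneg.mpr hd1),
    sq_nonneg (d - 0.3), sq_nonneg d, sq_nonneg (t-0.45),
    mul_nonneg (mul_nonneg (sub_nonneg.mpr ht0) (sub_nonneg.mpr ht1)) hd0,
    sub_nonneg.mpr ht0, sub_nonneg.mpr ht1, hd0, sub_nonneg.mpr hd1]

lemma num_exp : (0.106:ℝ) ≤ Real.exp (-(0.45*π^2/2)) := by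
  have hπu : π < 3.141593 := Real.pi_lt_d6
  have hπl : 3.141592 < π := Real.pi_gt_d6
  have hm : -(2.2206618:ℝ) ≤ -(0.45*π^2/2) := by nlinarith
  have h1 : Real.exp (-(0.45*π^2/2)) ≥ Real.exp (-2.2206618) := Real.exp_le_exp.mpr hm
  have h2 : Real.exp (0.2206618:ℝ) ≤ 1.248 := by
    have hb := Real.exp_bound' (x := 0.2206618) (by norm_num) (by norm_num) (n := 3) (by norm_num)
    have : ∑ m ∈ Finset.range 3, (0.2206618:ℝ)^m / m.factorial
        = 1 + 0.2206618 + 0.2206618^2/2 := by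
      norm_num [Finset.sum_range_succ, Nat.factorial]
    rw [this] at hb
    norm_num [Nat.factorial] at hb ⊢
    linarith
  have he1 := Real.exp_one_lt_d9
  have h3 : Real.exp (2.2206618:ℝ) = Real.exp 1 * Real.exp 1 * Real.exp 0.2206618 := by
    rw [← Real.exp_add, ← Real.exp_add]; norm_num
  have h4 : Real.exp (2.2206618:ℝ) ≤ 9.23 := by
    rw [h3]
    have h0 : (0:ℝ) < Real.exp 1 := Real.exp_pos 1
    have h5 : (0:ℝ) < Real.exp 0.2206618 := Real.exp_pos _
    nlinarith
  have h6 : Real.exp (-2.2206618:ℝ) * Real.exp (2.2206618:ℝ) = 1 := by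
    rw [← Real.exp_add]; norm_num
  have h7 : (0.106:ℝ) ≤ Real.exp (-2.2206618) := by
    have hp := Real.exp_pos (-2.2206618:ℝ)
    nlinarith
  linarith

lemma quad_mono {v w : ℝ} (hv : 0 ≤ v) (hvw : v ≤ w) :
    1 + v + v^2/2 ≤ 1 + w + w^2/2 := by nlinarith

lemma quad_pos {v : ℝ} (hv : 0 ≤ v) : (0:ℝ) ≤ 1 + v + v^2/2 := by positivity

lemma key_ineq {t θ : ℝ} (ht0 : 0.45 ≤ t) (ht1 : t ≤ 1/2) (hθ0 : 0 ≤ θ) (hθπ : θ ≤ π) :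
    1 - t*(1 - Real.cos θ) ≤ Real.exp (-(t*θ^2/2)) := by
  have ht0' : (0:ℝ) ≤ t := by linarith
  rcases le_or_gt θ 2.4 with hc | hc
  · -- region A
    have hcos := cos_ub hθ0 hθπ
    have hx1 : θ^2 ≤ 5.76 := by nlinarith
    have hq := qA ht0 ht1 (sq_nonneg θ) hx1
    have hu0 : 0 ≤ t*θ^2/2 := by positivity
    have hexp := exp_neg_ge_p5 hu0
    have hstep : 1 - t*(1 - Real.cos θ) ≤ 1 - t*(θ^2/2 - θ^4/24 + θ^6/1152) := by
      nlinarith [mul_nonneg ht0'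
        (by nlinarith [hcos] : (0:ℝ) ≤ (1 - Real.cos θ) - (θ^2/2 - θ^4/24 + θ^6/1152))]
    have hD : 0 ≤ t*θ^2 * (t/8 - t^2*θ^2/48 + t^3*(θ^2)^2/384 - t^4*(θ^2)^3/3840 - 1/24 + θ^2/1152) :=
      mul_nonneg (by positivity) hq
    nlinarith [hstep, hD, hexp]
  · -- region B
    have hπu : π < 3.141593 := Real.pi_lt_d6
    have hπl : 3.141592 < π := Real.pi_gt_d6
    have hd0 : 0 ≤ π - θ := by linarith
    have hd1 : π - θ ≤ 0.75 := by linarith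
    have hw0 : 0 ≤ t*π*(π-θ) - t*(π-θ)^2/2 := by
      nlinarith [mul_nonneg (mul_nonneg ht0' hd0) (by linarith : (0:ℝ) ≤ π - (π-θ)/2)]
    have hsplit : Real.exp (-(t*θ^2/2))
        = Real.exp (-(t*π^2/2)) * Real.exp (t*π*(π-θ) - t*(π-θ)^2/2) := by
      rw [← Real.exp_add]; congr 1; ring
    have hpB := polyB ht0 ht1 hd0 hd1
    have hquad := Real.quadratic_le_exp_of_nonneg hw0
    have hE1 : 0.106*(1 - 4.93481*(t-0.45)) ≤ Real.exp (-(t*π^2/2)) := by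
      have hs : Real.exp (-(t*π^2/2))
          = Real.exp (-(0.45*π^2/2)) * Real.exp (-((t-0.45)*π^2/2)) := by
        rw [← Real.exp_add]; congr 1; ring
      have hlin : 1 - (t-0.45)*π^2/2 ≤ Real.exp (-((t-0.45)*π^2/2)) := by
        have := Real.add_one_le_exp (-((t-0.45)*π^2/2)); linarith
      have hnum := num_exp
      have hpos : (0:ℝ) < Real.exp (-(0.45*π^2/2)) := Real.exp_pos _
      have hfac : (0:ℝ) ≤ 1 - (t-0.45)*π^2/2 := by nlinarith
      rw [hs]
      calc 0.106*(1-4.93481*(t-0.45)) ≤ 0.106*(1 - (t-0.45)*π^2/2) := by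
            nlinarith [mul_nonneg (by linarith : (0:ℝ) ≤ t - 0.45)
              (by nlinarith : (0:ℝ) ≤ 4.93481 - π^2/2)]
        _ ≤ Real.exp (-(0.45*π^2/2)) * (1 - (t-0.45)*π^2/2) := by nlinarith [hfac, hnum]
        _ ≤ Real.exp (-(0.45*π^2/2)) * Real.exp (-((t-0.45)*π^2/2)) := by
            nlinarith [hlin, hpos]
    have hv0 : 0 ≤ 2.76*t*(π-θ) := by
      have := mul_nonneg ht0' hd0; nlinarith
    have hwv : 2.76*t*(π-θ) ≤ t*π*(π-θ) - t*(π-θ)^2/2 := by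
      nlinarith [mul_nonneg (mul_nonneg ht0' hd0) (by linarith : (0:ℝ) ≤ π - (π-θ)/2 - 2.76)]
    have hmq : 1 + 2.76*t*(π-θ) + (2.76*t*(π-θ))^2/2
        ≤ 1 + (t*π*(π-θ) - t*(π-θ)^2/2) + (t*π*(π-θ) - t*(π-θ)^2/2)^2/2 :=
      quad_mono hv0 hwv
    have hcosb : Real.cos θ ≤ -1 + (π-θ)^2/2 := by
      have h1 : 1 - (π-θ)^2/2 ≤ Real.cos (π - θ) := Real.one_sub_sq_div_two_le_cos
      have h2 : Real.cos (π - θ) = - Real.cos θ := Real.cos_pi_sub θ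
      linarith
    have hchain : 1 - t*(1-Real.cos θ) ≤ 1 - 2*t + t*(π-θ)^2/2 := by
      nlinarith [mul_nonneg ht0' (by linarith : (0:ℝ) ≤ (-1 + (π-θ)^2/2) - Real.cos θ)]
    have hqpos : (0:ℝ) ≤ 1 + 2.76*t*(π-θ) + (2.76*t*(π-θ))^2/2 :=
      quad_pos hv0
    calc 1 - t*(1-Real.cos θ) ≤ 1 - 2*t + t*(π-θ)^2/2 := hchain
      _ ≤ 0.106*(1-4.93481*(t-0.45)) * (1 + 2.76*t*(π-θ) + (2.76*t*(π-θ))^2/2) := hpB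
      _ ≤ Real.exp (-(t*π^2/2))
          * (1 + (t*π*(π-θ) - t*(π-θ)^2/2) + (t*π*(π-θ) - t*(π-θ)^2/2)^2/2) :=
            mul_le_mul hE1 hmq hqpos (Real.exp_pos _).le
      _ ≤ Real.exp (-(t*π^2/2)) * Real.exp (t*π*(π-θ) - t*(π-θ)^2/2) :=
            mul_le_mul_of_nonneg_left hquad (Real.exp_pos _).le
      _ = Real.exp (-(t*θ^2/2)) := hsplit.symm

/-- Gaussian domination: with a = 2 − c², b = 2√(1 − c²) and 0 < c < 0.85,
a + b·cos θ ≤ (a + b)·exp(−θ²/(2(a/b + 1))) for θ ∈ [−π, π). -/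
theorem stmt17 (c : ℝ) (hc0 : 0 < c) (hc1 : c < 0.85)
    (θ : ℝ) (hθ : θ ∈ Set.Ico (-π) π) :
    (2 - c ^ 2) + 2 * Real.sqrt (1 - c ^ 2) * Real.cos θ ≤
      ((2 - c ^ 2) + 2 * Real.sqrt (1 - c ^ 2)) *
        Real.exp (-θ ^ 2 / (2 * ((2 - c ^ 2) / (2 * Real.sqrt (1 - c ^ 2)) + 1))) := by
  obtain ⟨hθl, hθr⟩ := hθ
  have hc2 : c^2 < 0.7225 := by nlinarith
  have h1c : (0:ℝ) < 1 - c^2 := by nlinarith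
  set s := Real.sqrt (1 - c^2) with hsdef
  have hs0 : 0 < s := Real.sqrt_pos.mpr h1c
  have hs2 : s^2 = 1 - c^2 := Real.sq_sqrt h1c.le
  have hs1 : s ≤ 1 := by nlinarith
  have hslb : 0.526 ≤ s := by nlinarith
  set t := 2*s/(1+s)^2 with htdef
  have hsp : (0:ℝ) < (1+s)^2 := by positivity
  have htid : t*(1+s)^2 = 2*s := by
    rw [htdef]; field_simp
  have ht0 : 0.45 ≤ t := by
    rw [htdef, le_div_iff₀ hsp]
    nlinarith [mul_nonneg (by linarith : (0:ℝ) ≤ s - 0.526) (by linarith : (0:ℝ) ≤ 1 - s)]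
  have ht1 : t ≤ 1/2 := by
    rw [htdef, div_le_iff₀ hsp]
    nlinarith [sq_nonneg (1-s)]
  have ha : 2 - c^2 = 1 + s^2 := by rw [hs2]; ring
  have habs0 : 0 ≤ |θ| := abs_nonneg θ
  have habsπ : |θ| ≤ π := abs_le.mpr ⟨by linarith, hθr.le⟩
  have hk := key_ineq ht0 ht1 habs0 habsπ
  rw [Real.cos_abs, sq_abs] at hk
  have hexpeq : -θ^2 / (2*((1+s^2)/(2*s) + 1)) = -(t*θ^2/2) := by
    rw [htdef]
    field_simp
    ring
  rw [ha, hexpeq]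
  have hmul := mul_le_mul_of_nonneg_left hk (le_of_lt hsp)
  have hid2 : (1+s)^2*(1 - t*(1-Real.cos θ)) = 1+s^2+2*s*Real.cos θ := by
    linear_combination (Real.cos θ - 1) * htid
  calc 1+s^2+2*s*Real.cos θ = (1+s)^2*(1 - t*(1-Real.cos θ)) := hid2.symm
    _ ≤ (1+s)^2 * Real.exp (-(t*θ^2/2)) := hmul
    _ = (1+s^2+2*s) * Real.exp (-(t*θ^2/2)) := by ring
end
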